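/- arXiv:2311.04520 — 11 statements merged into one kernel-verified Lean document; each statement's English description precedes it below -/
import Mathlib

section
/- Let f : ℝ^p → ℝ be differentiable with L-Lipschitz continuous gradient, suppose f attains its infimum f* = inf_y f(y) and the solution set Y* = {y ∈ ℝ^p : f(y) = f*} is nonempty, and suppose f satisfies the μ-Polyak–Łojasiewicz condition ‖∇f(y)‖² ≥ 2μ (f(y) − f*) for all y, with μ > 0. Then f satisfies the error-bound condition with constant μ: for every y ∈ ℝ^p, ‖∇f(y)‖ ≥ μ · dist(y, Y*), where dist(y, Y*) = inf_{y* ∈ Y*} ‖y − y*‖. -/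
/-!
Run gradient descent `z ↦ z - η • ∇f z` from `y` with a small step `η`. By the descent lemma and
the PL inequality, each step decreases `√(f - f*)` by at least `c(η) = (1 - Lη/2) √(2μ) / 2` times
the step length, so the iterates have total length at most `√(f y - f*) / c(η)`. They converge to
a critical point, which lies in `Y*` by PL again. Letting `η → 0` gives quadratic growth
`μ/2 · dist(y, Y*)² ≤ f y - f*`, and then `μ² dist(y, Y*)² ≤ 2μ (f y - f*) ≤ ‖∇f y‖²`.
-/

open scoped RealInnerProductSpace
open Filter Topology

theorem exists_tendsto_iterate_dist_le_of_dist_le_sub {X : Type*} [PseudoMetricSpace X]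
    [CompleteSpace X] {T : X → X} {φ : X → ℝ} (hφ : ∀ x, 0 ≤ φ x)
    (hT : ∀ x, dist x (T x) ≤ φ x - φ (T x)) (x : X) :
    ∃ xbar, Tendsto (fun n ↦ T^[n] x) atTop (𝓝 xbar) ∧ dist x xbar ≤ φ x := by
  set d : ℕ → ℝ := fun n ↦ φ (T^[n] x) - φ (T^[n + 1] x)
  have hd : ∀ n, dist (T^[n] x) (T^[n + 1] x) ≤ d n := fun n ↦ by
    simpa only [d, Function.iterate_succ_apply'] using hT (T^[n] x)
  have hd_nonneg : ∀ n, 0 ≤ d n := fun n ↦ dist_nonneg.trans (hd n)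
  have hsum : ∀ n, ∑ i ∈ Finset.range n, d i ≤ φ x := fun n ↦ by
    rw [Finset.sum_range_sub' (fun i ↦ φ (T^[i] x))]
    linarith [hφ (T^[n] x), show φ (T^[0] x) = φ x from rfl]
  have hd_summable : Summable d := summable_of_sum_range_le hd_nonneg hsum
  obtain ⟨xbar, hxbar⟩ :=
    cauchySeq_tendsto_of_complete (cauchySeq_of_dist_le_of_summable d hd hd_summable)
  exact ⟨xbar, hxbar, (dist_le_tsum_of_dist_le_of_tendsto₀ d hd hd_summable hxbar).trans
    (Real.tsum_le_of_sum_range_le hd_nonneg hsum)⟩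

theorem mul_mul_le_two_mul_sub_of_mul_sq_le_sq_sub_sq {a b g k s : ℝ} (ha : 0 ≤ a)
    (hk : 0 ≤ k) (hs : 0 ≤ s) (hstep : k * g ^ 2 ≤ a ^ 2 - b ^ 2) (hsa : s * a ≤ g) :
    k * g * s ≤ 2 * (a - b) := by
  have hg : 0 ≤ g := (mul_nonneg hs ha).trans hsa
  have hba : b ≤ a := by nlinarith [mul_nonneg hk (sq_nonneg g)]
  rcases hg.eq_or_lt with rfl | hg
  · nlinarith
  have h2a : k * g ^ 2 ≤ 2 * a * (a - b) := by nlinarith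
  have : k * g ^ 2 * s ≤ 2 * g * (a - b) := by
    nlinarith [mul_le_mul_of_nonneg_right h2a hs,
      mul_le_mul_of_nonneg_right hsa (sub_nonneg.2 hba)]
  nlinarith

variable {F : Type*} [NormedAddCommGroup F] [InnerProductSpace ℝ F]

theorem gradient_eq_zero_of_tendsto_iterate {f' : F → F} (hf' : Continuous f') {η : ℝ}
    (hη : η ≠ 0) {y xbar : F}
    (h : Tendsto (fun n ↦ (fun z ↦ z - η • f' z)^[n] y) atTop (𝓝 xbar)) : f' xbar = 0 := by
  have := isFixedPt_of_tendsto_iterate h (continuous_id.sub (hf'.const_smul η)).continuousAt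
  simpa [Function.IsFixedPt, hη] using this

variable [CompleteSpace F]

theorem HasGradientAt.hasDerivAt_comp_add_smul {f : F → ℝ} {g x v : F} {t : ℝ}
    (h : HasGradientAt f g (x + t • v)) :
    HasDerivAt (fun s : ℝ ↦ f (x + s • v)) ⟪g, v⟫ t := by
  have hline : HasDerivAt (fun s : ℝ ↦ x + s • v) v t := by
    simpa using ((hasDerivAt_id t).smul_const v).const_add x
  have := h.hasFDerivAt.comp_hasDerivAt t hline
  simp only [InnerProductSpace.toDual_apply_apply] at this
  exact this

section LipschitzGradient

variable {f : F → ℝ} {f' : F → F} {L : ℝ}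

theorem apply_add_le_of_lipschitz_gradient (hf : ∀ y, HasGradientAt f (f' y) y)
    (hlip : ∀ y₁ y₂, ‖f' y₁ - f' y₂‖ ≤ L * ‖y₁ - y₂‖) (x v : F) :
    f (x + v) ≤ f x + ⟪f' x, v⟫ + L / 2 * ‖v‖ ^ 2 := by
  set φ : ℝ → ℝ := fun t ↦ f (x + t • v) - t * ⟪f' x, v⟫ - L / 2 * t ^ 2 * ‖v‖ ^ 2
  have hφ' : ∀ t, HasDerivAt φ (⟪f' (x + t • v) - f' x, v⟫ - L * t * ‖v‖ ^ 2) t := fun t ↦ by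
    refine (((hf (x + t • v)).hasDerivAt_comp_add_smul.sub
      ((hasDerivAt_id t).mul_const ⟪f' x, v⟫)).sub
      (((hasDerivAt_pow 2 t).const_mul (L / 2)).mul_const (‖v‖ ^ 2))).congr_deriv ?_
    simp only [inner_sub_left]; push_cast; ring
  have hanti : AntitoneOn φ (Set.Ici 0) := by
    refine antitoneOn_of_hasDerivWithinAt_nonpos (convex_Ici 0)
      (fun t _ ↦ (hφ' t).continuousAt.continuousWithinAt)
      (fun t _ ↦ (hφ' t).hasDerivWithinAt) fun t ht ↦ ?_
    rw [interior_Ici, Set.mem_Ioi] at ht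
    have := calc
      ⟪f' (x + t • v) - f' x, v⟫ ≤ ‖f' (x + t • v) - f' x‖ * ‖v‖ := real_inner_le_norm _ _
      _ ≤ L * ‖t • v‖ * ‖v‖ := by gcongr; simpa using hlip (x + t • v) x
      _ = L * t * ‖v‖ ^ 2 := by rw [norm_smul, Real.norm_of_nonneg ht.le]; ring
    linarith
  have := hanti Set.self_mem_Ici (zero_le_one' ℝ) zero_le_one
  simp only [φ, one_smul, one_mul, one_pow, mul_one, zero_smul, add_zero, zero_mul, sub_zero,
    ne_eq, OfNat.ofNat_ne_zero, not_false_eq_true, zero_pow, mul_zero] at this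
  linarith

theorem apply_sub_smul_le_of_lipschitz_gradient (hf : ∀ y, HasGradientAt f (f' y) y)
    (hlip : ∀ y₁ y₂, ‖f' y₁ - f' y₂‖ ≤ L * ‖y₁ - y₂‖) (x : F) (η : ℝ) :
    f (x - η • f' x) ≤ f x - η * (1 - L * η / 2) * ‖f' x‖ ^ 2 := by
  have := apply_add_le_of_lipschitz_gradient hf hlip x (-(η • f' x))
  rw [← sub_eq_add_neg, inner_neg_right, real_inner_smul_right, real_inner_self_eq_norm_sq,
    norm_neg, norm_smul, mul_pow, Real.norm_eq_abs, sq_abs] at this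
  linarith

end LipschitzGradient

section PolyakLojasiewicz

variable {f : F → ℝ} {f' : F → F} {L μ fstar : ℝ}
  (hf : ∀ y, HasGradientAt f (f' y) y) (hlip : ∀ y₁ y₂, ‖f' y₁ - f' y₂‖ ≤ L * ‖y₁ - y₂‖)
  (hlow : ∀ y, fstar ≤ f y) (hPL : ∀ y, ‖f' y‖ ^ 2 ≥ 2 * μ * (f y - fstar))
include hf hlip hlow hPL

theorem dist_gradient_step_mul_le {η : ℝ} (hη : 0 ≤ η) (hηL : L * η ≤ 2) (x : F) :
    dist x (x - η • f' x) * ((1 - L * η / 2) * √(2 * μ) / 2)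
      ≤ √(f x - fstar) - √(f (x - η • f' x) - fstar) := by
  have hΔ : 0 ≤ f x - fstar := sub_nonneg.2 (hlow x)
  have hstep : η * (1 - L * η / 2) * ‖f' x‖ ^ 2
      ≤ √(f x - fstar) ^ 2 - √(f (x - η • f' x) - fstar) ^ 2 := by
    rw [Real.sq_sqrt hΔ, Real.sq_sqrt (sub_nonneg.2 (hlow _))]
    linarith [apply_sub_smul_le_of_lipschitz_gradient hf hlip x η]
  have hgrad : √(2 * μ) * √(f x - fstar) ≤ ‖f' x‖ := by
    rw [← Real.sqrt_mul' _ hΔ, Real.sqrt_le_left (norm_nonneg _)]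
    exact hPL x
  have := mul_mul_le_two_mul_sub_of_mul_sq_le_sq_sub_sq (Real.sqrt_nonneg _)
    (mul_nonneg hη (by linarith)) (Real.sqrt_nonneg _) hstep hgrad
  rw [dist_self_sub_right, norm_smul, Real.norm_of_nonneg hη]
  linarith

theorem infDist_mul_le_sqrt (hμ : 0 < μ) {η : ℝ} (hη : 0 < η) (hηL : L * η < 2) (y : F) :
    Metric.infDist y {z | f z = fstar} * ((1 - L * η / 2) * √(2 * μ) / 2)
      ≤ √(f y - fstar) := by
  set c := (1 - L * η / 2) * √(2 * μ) / 2
  have hc : 0 < c :=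
    div_pos (mul_pos (by linarith) (Real.sqrt_pos.2 (by positivity))) two_pos
  have hf' : Continuous f' :=
    (LipschitzWith.of_dist_le_mul (K := L.toNNReal) fun a b ↦ by
      simpa only [dist_eq_norm] using
        (hlip a b).trans (by gcongr; exact L.le_coe_toNNReal)).continuous
  obtain ⟨xbar, hlim, hdist⟩ := exists_tendsto_iterate_dist_le_of_dist_le_sub
    (T := fun z ↦ z - η • f' z) (φ := fun z ↦ √(f z - fstar) / c)
    (fun z ↦ by positivity) (fun z ↦ by
      rw [← sub_div, le_div_iff₀ hc]
      exact dist_gradient_step_mul_le hf hlip hlow hPL hη.le hηL.le z) y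
  have hmin : xbar ∈ {z | f z = fstar} := by
    have := hPL xbar
    rw [gradient_eq_zero_of_tendsto_iterate hf' hη.ne' hlim, norm_zero] at this
    exact le_antisymm (by nlinarith) (hlow xbar)
  rw [← le_div_iff₀ hc]
  exact (Metric.infDist_le_dist_of_mem hmin).trans hdist

theorem half_mul_infDist_sq_le (hμ : 0 < μ) (y : F) :
    μ / 2 * Metric.infDist y {z | f z = fstar} ^ 2 ≤ f y - fstar := by
  set d := Metric.infDist y {z | f z = fstar}
  have hcoef : Tendsto (fun η ↦ d * ((1 - L * η / 2) * √(2 * μ) / 2)) (𝓝[>] 0)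
      (𝓝 (d * ((1 - L * 0 / 2) * √(2 * μ) / 2))) :=
    (Continuous.tendsto (by fun_prop) 0).mono_left nhdsWithin_le_nhds
  simp only [mul_zero, zero_div, sub_zero, one_mul] at hcoef
  have hsmall : ∀ᶠ η in 𝓝[>] 0, L * η < 2 :=
    ((Continuous.tendsto (by fun_prop : Continuous fun η : ℝ ↦ L * η) 0).mono_left
      nhdsWithin_le_nhds).eventually (gt_mem_nhds (by simp))
  have hle : d * (√(2 * μ) / 2) ≤ √(f y - fstar) := by
    refine le_of_tendsto hcoef ?_
    filter_upwards [self_mem_nhdsWithin, hsmall] with η hη hηL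
    exact infDist_mul_le_sqrt hf hlip hlow hPL hμ hη hηL y
  have hd : 0 ≤ d * (√(2 * μ) / 2) := by
    have := Metric.infDist_nonneg (x := y) (s := {z | f z = fstar})
    positivity
  have := pow_le_pow_left₀ hd hle 2
  rw [Real.sq_sqrt (sub_nonneg.2 (hlow y)), mul_pow, div_pow, Real.sq_sqrt (by positivity)] at this
  linarith

end PolyakLojasiewicz

theorem stmt_1_general {p : ℕ} (μ L : ℝ) (hμ : 0 < μ)
    (f : EuclideanSpace ℝ (Fin p) → ℝ)
    (f' : EuclideanSpace ℝ (Fin p) → EuclideanSpace ℝ (Fin p))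
    (hdiff : ∀ y, HasGradientAt f (f' y) y)
    (hlip : ∀ y₁ y₂, ‖f' y₁ - f' y₂‖ ≤ L * ‖y₁ - y₂‖)
    (fstar : ℝ) (hlow : ∀ y, fstar ≤ f y)
    (hPL : ∀ y, ‖f' y‖ ^ 2 ≥ 2 * μ * (f y - fstar)) :
    ∀ y, ‖f' y‖ ≥ μ * Metric.infDist y {z | f z = fstar} := by
  intro y
  have hgrowth := half_mul_infDist_sq_le hdiff hlip hlow hPL hμ y
  have hsq : (μ * Metric.infDist y {z | f z = fstar}) ^ 2 ≤ ‖f' y‖ ^ 2 := by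
    nlinarith [hPL y]
  have hd := Metric.infDist_nonneg (x := y) (s := {z | f z = fstar})
  exact (pow_le_pow_iff_left₀ (by positivity) (norm_nonneg _) two_ne_zero).1 hsq

/-- A differentiable function with `L`-Lipschitz gradient that attains its
infimum `f*` and satisfies the `μ`-PL condition satisfies the error-bound condition
`‖∇f(y)‖ ≥ μ · dist(y, Y*)`, where `Y* = {y : f y = f*}`. -/
theorem stmt_1 {p : ℕ} (μ L : ℝ) (hμ : 0 < μ)
    (f : EuclideanSpace ℝ (Fin p) → ℝ)
    (f' : EuclideanSpace ℝ (Fin p) → EuclideanSpace ℝ (Fin p))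
    (hdiff : ∀ y, HasGradientAt f (f' y) y)
    (hlip : ∀ y₁ y₂, ‖f' y₁ - f' y₂‖ ≤ L * ‖y₁ - y₂‖)
    (fstar : ℝ) (hlow : ∀ y, fstar ≤ f y) (hattain : ∃ y, f y = fstar)
    (hPL : ∀ y, ‖f' y‖ ^ 2 ≥ 2 * μ * (f y - fstar)) :
    ∀ y, ‖f' y‖ ≥ μ * Metric.infDist y {z | f z = fstar} :=
  stmt_1_general μ L hμ f f' hdiff hlip fstar hlow hPL
end

section
/- Let f : ℝ^p → ℝ be differentiable with L-Lipschitz continuous gradient, suppose f attains its infimum f* = inf_y f(y) and the solution set Y* = {y ∈ ℝ^p : f(y) = f*} is nonempty, and suppose f satisfies the μ-Polyak–Łojasiewicz condition ‖∇f(y)‖² ≥ 2μ (f(y) − f*) for all y, with μ > 0. Then f satisfies the quadratic growth condition with constant μ: for every y ∈ ℝ^p, f(y) − f* ≥ (μ/2) · dist(y, Y*)², where dist(y, Y*) = inf_{y* ∈ Y*} ‖y − y*‖. -/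
/-!
Run gradient descent with a step `η` from `y`. By the descent lemma and the PL inequality, each
step lowers `√(f - f*)` by at least `(1 - Lη/2) √(μ/2)` times its length, so the trajectory has
length at most `√(f y - f*) / ((1 - Lη/2) √(μ/2))`. It therefore converges, to a critical point,
which the PL inequality makes a minimiser. Letting `η → 0` gives
`√(μ/2) · dist(y, Y*) ≤ √(f y - f*)`.
-/

open scoped RealInnerProductSpace NNReal Topology
open Filter Finset Metric

theorem exists_tendsto_mul_dist_le_of_mul_dist_le_sub {X : Type*} [PseudoMetricSpace X]
    [CompleteSpace X] {y : ℕ → X} {g : ℕ → ℝ} {c : ℝ} (hc : 0 < c) (hg : ∀ n, 0 ≤ g n)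
    (hstep : ∀ n, c * dist (y n) (y (n + 1)) ≤ g n - g (n + 1)) :
    ∃ a, Tendsto y atTop (𝓝 a) ∧ c * dist (y 0) a ≤ g 0 := by
  set d : ℕ → ℝ := fun n => (g n - g (n + 1)) / c
  have hd : ∀ n, dist (y n) (y (n + 1)) ≤ d n := fun n => (le_div_iff₀' hc).2 (hstep n)
  have hd0 : ∀ n, 0 ≤ d n := fun n => dist_nonneg.trans (hd n)
  have hpartial : ∀ n, ∑ k ∈ range n, d k ≤ g 0 / c := fun n => by
    rw [← Finset.sum_div, Finset.sum_range_sub' g n]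
    gcongr
    linarith [hg n]
  have hsum : Summable d := summable_of_sum_range_le hd0 hpartial
  obtain ⟨a, ha⟩ := cauchySeq_tendsto_of_complete (cauchySeq_of_dist_le_of_summable d hd hsum)
  refine ⟨a, ha, (le_div_iff₀' hc).1 ?_⟩
  exact (dist_le_tsum_of_dist_le_of_tendsto₀ d hd hsum ha).trans
    (Real.tsum_le_of_sum_range_le hd0 hpartial)

theorem Real.mul_sqrt_le_sqrt_sub_sqrt {a b t N μ : ℝ} (hb : 0 ≤ b) (ht : 0 ≤ t) (hN : 0 ≤ N)
    (hμ : 0 ≤ μ) (hdecr : b ≤ a - t * N ^ 2) (haN : 2 * μ * a ≤ N ^ 2) :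
    t * √(μ / 2) * N ≤ √a - √b := by
  have ha : 0 ≤ a := by nlinarith
  have hsa := Real.sq_sqrt ha
  have hsb := Real.sq_sqrt hb
  have hsμ := Real.sq_sqrt (show 0 ≤ μ / 2 by positivity)
  have hba : √b ≤ √a := Real.sqrt_le_sqrt (by nlinarith)
  have hgrad : 2 * √(μ / 2) * √a ≤ N := by
    refine (pow_le_pow_iff_left₀ (by positivity) hN two_ne_zero).1 ?_
    rw [mul_pow, mul_pow, hsμ, hsa]
    linarith
  rcases (Real.sqrt_nonneg a).eq_or_lt with h0 | hpos
  · have ha0 : a = 0 := by rw [← hsa, ← h0]; ring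
    have htN : t * N = 0 := by nlinarith [mul_nonneg ht hN]
    have hb0 : √b = 0 := le_antisymm (h0 ▸ hba) (Real.sqrt_nonneg b)
    rw [← h0, hb0, mul_right_comm, htN, zero_mul, sub_zero]
  · have hsqrt_sum : √(μ / 2) * (√a + √b) ≤ N := by nlinarith [Real.sqrt_nonneg (μ / 2)]
    have key : t * √(μ / 2) * N * (√a + √b) ≤ (√a - √b) * (√a + √b) :=
      calc t * √(μ / 2) * N * (√a + √b) = t * N * (√(μ / 2) * (√a + √b)) := by ring
        _ ≤ t * N * N := by gcongr
        _ ≤ a - b := by nlinarith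
        _ = (√a - √b) * (√a + √b) := by nlinarith
    exact le_of_mul_le_mul_right key (by positivity)

section Gradient

variable {E : Type*} [NormedAddCommGroup E] [InnerProductSpace ℝ E] [CompleteSpace E]
  {f : E → ℝ} {f' : E → E} {K : ℝ≥0}

theorem image_add_le_of_lipschitzWith_gradient (hf : ∀ x, HasGradientAt f (f' x) x)
    (hK : LipschitzWith K f') (x v : E) :
    f (x + v) ≤ f x + ⟪f' x, v⟫ + K / 2 * ‖v‖ ^ 2 := by
  let φ : ℝ → ℝ := fun t => f (x + t • v) - t * ⟪f' x, v⟫ - K / 2 * t ^ 2 * ‖v‖ ^ 2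
  have hφ : ∀ t, HasDerivAt φ (⟪f' (x + t • v) - f' x, v⟫ - K * t * ‖v‖ ^ 2) t := by
    intro t
    have hline : HasDerivAt (fun t : ℝ => x + t • v) v t := by
      simpa using ((hasDerivAt_id t).smul_const v).const_add x
    have hcomp := (hf (x + t • v)).hasFDerivAt.comp_hasDerivAt t hline
    simp only [InnerProductSpace.toDual_apply_apply] at hcomp
    refine ((hcomp.sub ((hasDerivAt_id t).mul_const ⟪f' x, v⟫)).sub
      (((hasDerivAt_pow 2 t).const_mul (K / 2 : ℝ)).mul_const (‖v‖ ^ 2))).congr_deriv ?_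
    rw [inner_sub_left]
    ring
  have hanti : AntitoneOn φ (Set.Ici 0) := by
    refine antitoneOn_of_hasDerivWithinAt_nonpos (convex_Ici 0)
      (fun t _ => (hφ t).continuousAt.continuousWithinAt) (fun t _ => (hφ t).hasDerivWithinAt) ?_
    intro t ht
    rw [interior_Ici, Set.mem_Ioi] at ht
    have hdiff : ‖f' (x + t • v) - f' x‖ ≤ K * (t * ‖v‖) := by
      simpa [norm_smul, abs_of_pos ht] using hK.norm_sub_le (x + t • v) x
    rw [sub_nonpos]
    calc ⟪f' (x + t • v) - f' x, v⟫ ≤ ‖f' (x + t • v) - f' x‖ * ‖v‖ := real_inner_le_norm _ _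
      _ ≤ K * (t * ‖v‖) * ‖v‖ := by gcongr
      _ = K * t * ‖v‖ ^ 2 := by ring
  have := hanti (Set.mem_Ici.2 le_rfl) (Set.mem_Ici.2 zero_le_one) zero_le_one
  simp only [φ, zero_smul, add_zero, one_smul, zero_mul, one_pow, one_mul, zero_pow two_ne_zero,
    mul_zero, sub_zero] at this
  linarith

theorem image_sub_smul_gradient_le (hf : ∀ x, HasGradientAt f (f' x) x)
    (hK : LipschitzWith K f') (η : ℝ) (w : E) :
    f (w - η • f' w) ≤ f w - η * (1 - K * η / 2) * ‖f' w‖ ^ 2 := by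
  have h := image_add_le_of_lipschitzWith_gradient hf hK w (-(η • f' w))
  rw [← sub_eq_add_neg, inner_neg_right, real_inner_smul_right, real_inner_self_eq_norm_sq,
    norm_neg, norm_smul, Real.norm_eq_abs, mul_pow, sq_abs] at h
  linarith

variable {μ fstar : ℝ}

theorem mul_dist_gradient_step_le_sqrt_sub_sqrt (hf : ∀ x, HasGradientAt f (f' x) x)
    (hK : LipschitzWith K f') (hμ : 0 ≤ μ) (hlow : ∀ y, fstar ≤ f y)
    (hPL : ∀ y, 2 * μ * (f y - fstar) ≤ ‖f' y‖ ^ 2) {η : ℝ} (hη : 0 ≤ η)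
    (hθ : 0 ≤ 1 - K * η / 2) (w : E) :
    (1 - K * η / 2) * √(μ / 2) * dist w (w - η • f' w) ≤
      √(f w - fstar) - √(f (w - η • f' w) - fstar) := by
  have hdist : dist w (w - η • f' w) = η * ‖f' w‖ := by
    rw [dist_eq_norm, sub_sub_cancel, norm_smul, Real.norm_of_nonneg hη]
  calc _ = η * (1 - K * η / 2) * √(μ / 2) * ‖f' w‖ := by rw [hdist]; ring
    _ ≤ _ := Real.mul_sqrt_le_sqrt_sub_sqrt (sub_nonneg.2 (hlow _)) (by positivity)
      (norm_nonneg _) hμ (by linarith [image_sub_smul_gradient_le hf hK η w]) (hPL w)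

theorem mul_infDist_le_sqrt (hf : ∀ x, HasGradientAt f (f' x) x)
    (hK : LipschitzWith K f') (hμ : 0 < μ) (hlow : ∀ y, fstar ≤ f y)
    (hPL : ∀ y, 2 * μ * (f y - fstar) ≤ ‖f' y‖ ^ 2) {η : ℝ} (hη : 0 < η)
    (hθ : 0 < 1 - K * η / 2) (y₀ : E) :
    (1 - K * η / 2) * √(μ / 2) * infDist y₀ {z | f z = fstar} ≤ √(f y₀ - fstar) := by
  set y : ℕ → E := fun n => (fun z => z - η • f' z)^[n] y₀
  have hy : ∀ n, y (n + 1) = y n - η • f' (y n) := fun n => Function.iterate_succ_apply' _ _ _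
  have hstep (n : ℕ) : (1 - K * η / 2) * √(μ / 2) * dist (y n) (y (n + 1)) ≤
      √(f (y n) - fstar) - √(f (y (n + 1)) - fstar) := by
    rw [hy]
    exact mul_dist_gradient_step_le_sqrt_sub_sqrt hf hK hμ.le hlow hPL hη.le hθ.le (y n)
  obtain ⟨a, hya, hdist⟩ := exists_tendsto_mul_dist_le_of_mul_dist_le_sub (by positivity)
    (fun n => Real.sqrt_nonneg _) hstep
  have hgrad : f' a = 0 := by
    have hlim : Tendsto (fun n => η⁻¹ • (y n - y (n + 1))) atTop (𝓝 (η⁻¹ • (a - a))) :=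
      (hya.sub (hya.comp (tendsto_add_atTop_nat 1))).const_smul η⁻¹
    have hsteps : (fun n => η⁻¹ • (y n - y (n + 1))) = f' ∘ y := funext fun n => by
      simp only [hy, sub_sub_cancel, inv_smul_smul₀ hη.ne', Function.comp_apply]
    rw [hsteps, sub_self, smul_zero] at hlim
    exact tendsto_nhds_unique ((hK.continuous.tendsto a).comp hya) hlim
  have hmem : a ∈ {z | f z = fstar} := by
    have hPLa := hPL a
    rw [hgrad, norm_zero] at hPLa
    exact le_antisymm (by nlinarith) (hlow a)
  calc _ ≤ (1 - K * η / 2) * √(μ / 2) * dist y₀ a := by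
        gcongr
        exact infDist_le_dist_of_mem hmem
    _ ≤ _ := hdist

end Gradient

theorem stmt_2_general {p : ℕ} (μ L : ℝ) (hμ : 0 < μ)
    (f : EuclideanSpace ℝ (Fin p) → ℝ)
    (f' : EuclideanSpace ℝ (Fin p) → EuclideanSpace ℝ (Fin p))
    (hdiff : ∀ y, HasGradientAt f (f' y) y)
    (hlip : ∀ y₁ y₂, ‖f' y₁ - f' y₂‖ ≤ L * ‖y₁ - y₂‖)
    (fstar : ℝ) (hlow : ∀ y, fstar ≤ f y)
    (hPL : ∀ y, ‖f' y‖ ^ 2 ≥ 2 * μ * (f y - fstar)) :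
    ∀ y, f y - fstar ≥ (μ / 2) * Metric.infDist y {z | f z = fstar} ^ 2 := by
  intro y
  set K := L.toNNReal
  set D := infDist y {z | f z = fstar}
  have hK : LipschitzWith K f' :=
    LipschitzWith.of_dist_le' fun a b => by simpa only [dist_eq_norm] using hlip a b
  have hθ : Tendsto (fun η : ℝ => 1 - K * η / 2) (𝓝[>] 0) (𝓝 1) :=
    tendsto_nhdsWithin_of_tendsto_nhds <| by
      simpa using (Continuous.tendsto (f := fun η : ℝ => 1 - K * η / 2) (by fun_prop) 0)
  have hbound : ∀ᶠ η in 𝓝[>] 0, (1 - K * η / 2) * √(μ / 2) * D ≤ √(f y - fstar) := by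
    filter_upwards [hθ.eventually (lt_mem_nhds one_pos), self_mem_nhdsWithin] with η hθη hη
    exact mul_infDist_le_sqrt hdiff hK hμ hlow hPL hη hθη y
  have hsqrt : √(μ / 2) * D ≤ √(f y - fstar) := by
    simpa using le_of_tendsto ((hθ.mul_const _).mul_const _) hbound
  rw [Real.le_sqrt (mul_nonneg (Real.sqrt_nonneg _) infDist_nonneg) (sub_nonneg.2 (hlow y)),
    mul_pow, Real.sq_sqrt (by positivity)] at hsqrt
  exact hsqrt

/-- A differentiable function with `L`-Lipschitz gradient that attains its
infimum `f*` and satisfies the `μ`-PL condition satisfies the quadratic growth condition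
`f(y) − f* ≥ (μ/2) · dist(y, Y*)²`, where `Y* = {y : f y = f*}`. -/
theorem stmt_2 {p : ℕ} (μ L : ℝ) (hμ : 0 < μ)
    (f : EuclideanSpace ℝ (Fin p) → ℝ)
    (f' : EuclideanSpace ℝ (Fin p) → EuclideanSpace ℝ (Fin p))
    (hdiff : ∀ y, HasGradientAt f (f' y) y)
    (hlip : ∀ y₁ y₂, ‖f' y₁ - f' y₂‖ ≤ L * ‖y₁ - y₂‖)
    (fstar : ℝ) (hlow : ∀ y, fstar ≤ f y) (hattain : ∃ y, f y = fstar)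
    (hPL : ∀ y, ‖f' y‖ ^ 2 ≥ 2 * μ * (f y - fstar)) :
    ∀ y, f y - fstar ≥ (μ / 2) * Metric.infDist y {z | f z = fstar} ^ 2 :=
  stmt_2_general μ L hμ f f' hdiff hlip fstar hlow hPL
end

section
/- Let f, g : ℝ^d × ℝ^p → ℝ with f continuously differentiable and g twice continuously differentiable. Let y* : ℝ^d → ℝ^p be a differentiable map such that ∇_y g(x, y*(x)) = 0 for every x ∈ ℝ^d and such that the Hessian ∇²_{yy} g(x, y*(x)) ∈ ℝ^{p×p} is invertible for every x. Define F(x) = f(x, y*(x)). Then F is differentiable and for every x ∈ ℝ^d, ∇F(x) = ∇_x f(x, y*(x)) − ∇²_{xy} g(x, y*(x)) [∇²_{yy} g(x, y*(x))]^{-1} ∇_y f(x, y*(x)). -/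
open scoped RealInnerProductSpace

/-!
Differentiating the identity `∇_y g(x, y*(x)) = 0` along the graph of `y*` gives
`∇²_{yx} g + ∇²_{yy} g · Dy* = 0`. The chain rule gives
`DF(x) w = ⟪∇_x f, w⟫ + ⟪∇_y f, Dy* w⟫`, and writing `∇_y f = H (H⁻¹ ∇_y f)` with the symmetric
Hessian `H = ∇²_{yy} g` turns the second term into `-⟪H⁻¹ ∇_y f, ∇²_{yx} g w⟫`.
-/

open ContinuousLinearMap

section Graph

variable {𝕜 : Type*} [NontriviallyNormedField 𝕜]
  {E F G : Type*} [NormedAddCommGroup E] [NormedSpace 𝕜 E] [NormedAddCommGroup F] [NormedSpace 𝕜 F]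
  [NormedAddCommGroup G] [NormedSpace 𝕜 G]
  {φ : E × F → G} {A : E →L[𝕜] G} {B : F →L[𝕜] G} {y : E → F} {D : E →L[𝕜] F} {x : E}

theorem HasFDerivAt.comp_graph
    (hφ : HasFDerivAt φ (A.comp (fst 𝕜 E F) + B.comp (snd 𝕜 E F)) (x, y x))
    (hy : HasFDerivAt y D x) :
    HasFDerivAt (fun x' => φ (x', y x')) (A + B.comp D) x := by
  refine (hφ.comp x ((hasFDerivAt_id x).prodMk hy)).congr_fderiv ?_
  ext v
  simp

theorem HasFDerivAt.comp_eq_neg_of_graph_eq_zero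
    (hφ : HasFDerivAt φ (A.comp (fst 𝕜 E F) + B.comp (snd 𝕜 E F)) (x, y x))
    (hy : HasFDerivAt y D x) (hzero : ∀ x', φ (x', y x') = 0) :
    B.comp D = -A := by
  have hconst : HasFDerivAt (fun x' => φ (x', y x')) (0 : E →L[𝕜] G) x := by
    simpa only [hzero] using hasFDerivAt_const (0 : G) x
  exact eq_neg_of_add_eq_zero_right ((hφ.comp_graph hy).unique hconst)

end Graph

theorem inner_apply_eq_neg_inner_adjoint {E F : Type*}
    [NormedAddCommGroup E] [InnerProductSpace ℝ E] [CompleteSpace E]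
    [NormedAddCommGroup F] [InnerProductSpace ℝ F] [CompleteSpace F]
    {A D : E →L[ℝ] F} {H Hinv : F →L[ℝ] F}
    (hsymm : ∀ v w, ⟪H v, w⟫ = ⟪v, H w⟫) (hinv : H.comp Hinv = ContinuousLinearMap.id ℝ F)
    (hD : H.comp D = -A)
    (u : F) (w : E) :
    ⟪u, D w⟫ = -⟪adjoint A (Hinv u), w⟫ := by
  calc ⟪u, D w⟫ = ⟪H (Hinv u), D w⟫ := by rw [← comp_apply, hinv, id_apply]
    _ = ⟪Hinv u, H (D w)⟫ := hsymm _ _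
    _ = ⟪Hinv u, -A w⟫ := by rw [← comp_apply, hD, neg_apply]
    _ = -⟪adjoint A (Hinv u), w⟫ := by rw [inner_neg_right, adjoint_inner_left]

theorem stmt_3_general {d p : ℕ}
    (f : EuclideanSpace ℝ (Fin d) → EuclideanSpace ℝ (Fin p) → ℝ)
    (fx : EuclideanSpace ℝ (Fin d) → EuclideanSpace ℝ (Fin p) → EuclideanSpace ℝ (Fin d))
    (fy : EuclideanSpace ℝ (Fin d) → EuclideanSpace ℝ (Fin p) → EuclideanSpace ℝ (Fin p))
    -- `f` is (continuously) differentiable, with joint derivative given by the partial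
    -- gradients `fx`, `fy`:
    (hf : ∀ x y, HasFDerivAt (fun q : EuclideanSpace ℝ (Fin d) × EuclideanSpace ℝ (Fin p) => f q.1 q.2)
      ((innerSL ℝ (fx x y)).comp (ContinuousLinearMap.fst ℝ _ _)
        + (innerSL ℝ (fy x y)).comp (ContinuousLinearMap.snd ℝ _ _)) (x, y))
    -- `gy` is the partial gradient of `g` in `y`:
    (gy : EuclideanSpace ℝ (Fin d) → EuclideanSpace ℝ (Fin p) → EuclideanSpace ℝ (Fin p))
    -- `g` is twice differentiable: `gy` has joint derivative with `x`-block `Gyx` and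
    -- `y`-block (Hessian) `Hyy`:
    (Gyx : EuclideanSpace ℝ (Fin d) → EuclideanSpace ℝ (Fin p) →
      (EuclideanSpace ℝ (Fin d) →L[ℝ] EuclideanSpace ℝ (Fin p)))
    (Hyy : EuclideanSpace ℝ (Fin d) → EuclideanSpace ℝ (Fin p) →
      (EuclideanSpace ℝ (Fin p) →L[ℝ] EuclideanSpace ℝ (Fin p)))
    (hgy' : ∀ x y, HasFDerivAt (fun q : EuclideanSpace ℝ (Fin d) × EuclideanSpace ℝ (Fin p) => gy q.1 q.2)
      ((Gyx x y).comp (ContinuousLinearMap.fst ℝ _ _)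
        + (Hyy x y).comp (ContinuousLinearMap.snd ℝ _ _)) (x, y))
    -- the Hessian is symmetric:
    (hsymm : ∀ x y v w, ⟪Hyy x y v, w⟫ = ⟪v, Hyy x y w⟫)
    -- `y*` is differentiable with `∇_y g(x, y*(x)) = 0`:
    (ystar : EuclideanSpace ℝ (Fin d) → EuclideanSpace ℝ (Fin p))
    (hystar : Differentiable ℝ ystar)
    (hcrit : ∀ x, gy x (ystar x) = 0)
    -- the Hessian `∇²_{yy} g(x, y*(x))` is invertible, with inverse `Hinv x`:
    (Hinv : EuclideanSpace ℝ (Fin d) → (EuclideanSpace ℝ (Fin p) →L[ℝ] EuclideanSpace ℝ (Fin p)))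
    (hinv1 : ∀ x, (Hyy x (ystar x)).comp (Hinv x) = ContinuousLinearMap.id ℝ _) :
    ∀ x, HasGradientAt (fun x' => f x' (ystar x'))
      (fx x (ystar x)
        - ContinuousLinearMap.adjoint (Gyx x (ystar x)) (Hinv x (fy x (ystar x)))) x := by
  intro x
  have hy := (hystar x).hasFDerivAt
  have hD : (Hyy x (ystar x)).comp (fderiv ℝ ystar x) = -Gyx x (ystar x) :=
    (hgy' x (ystar x)).comp_eq_neg_of_graph_eq_zero hy hcrit
  rw [hasGradientAt_iff_hasFDerivAt]
  refine ((hf x (ystar x)).comp_graph hy).congr_fderiv ?_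
  ext w
  simp [inner_apply_eq_neg_inner_adjoint (hsymm x (ystar x)) (hinv1 x) hD, sub_eq_add_neg]

/-- Hypergradient formula: if `y*(x)` is a differentiable implicit solution
map with `∇_y g(x, y*(x)) = 0` and invertible Hessian `∇²_{yy} g(x, y*(x))`, then
`F(x) = f(x, y*(x))` is differentiable with
`∇F(x) = ∇_x f(x,y*(x)) − ∇²_{xy} g(x,y*(x)) [∇²_{yy} g(x,y*(x))]⁻¹ ∇_y f(x,y*(x))`.
Here the cross derivative `∇²_{xy} g` is the adjoint of the Fréchet derivative in `x` of
`∇_y g`. -/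
theorem stmt_3 {d p : ℕ}
    (f g : EuclideanSpace ℝ (Fin d) → EuclideanSpace ℝ (Fin p) → ℝ)
    (fx : EuclideanSpace ℝ (Fin d) → EuclideanSpace ℝ (Fin p) → EuclideanSpace ℝ (Fin d))
    (fy : EuclideanSpace ℝ (Fin d) → EuclideanSpace ℝ (Fin p) → EuclideanSpace ℝ (Fin p))
    -- `f` is (continuously) differentiable, with joint derivative given by the partial
    -- gradients `fx`, `fy`:
    (hf : ∀ x y, HasFDerivAt (fun q : EuclideanSpace ℝ (Fin d) × EuclideanSpace ℝ (Fin p) => f q.1 q.2)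
      ((innerSL ℝ (fx x y)).comp (ContinuousLinearMap.fst ℝ _ _)
        + (innerSL ℝ (fy x y)).comp (ContinuousLinearMap.snd ℝ _ _)) (x, y))
    -- `gy` is the partial gradient of `g` in `y`:
    (gy : EuclideanSpace ℝ (Fin d) → EuclideanSpace ℝ (Fin p) → EuclideanSpace ℝ (Fin p))
    (hgy : ∀ x y, HasGradientAt (fun y' => g x y') (gy x y) y)
    -- `g` is twice differentiable: `gy` has joint derivative with `x`-block `Gyx` and
    -- `y`-block (Hessian) `Hyy`:
    (Gyx : EuclideanSpace ℝ (Fin d) → EuclideanSpace ℝ (Fin p) →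
      (EuclideanSpace ℝ (Fin d) →L[ℝ] EuclideanSpace ℝ (Fin p)))
    (Hyy : EuclideanSpace ℝ (Fin d) → EuclideanSpace ℝ (Fin p) →
      (EuclideanSpace ℝ (Fin p) →L[ℝ] EuclideanSpace ℝ (Fin p)))
    (hgy' : ∀ x y, HasFDerivAt (fun q : EuclideanSpace ℝ (Fin d) × EuclideanSpace ℝ (Fin p) => gy q.1 q.2)
      ((Gyx x y).comp (ContinuousLinearMap.fst ℝ _ _)
        + (Hyy x y).comp (ContinuousLinearMap.snd ℝ _ _)) (x, y))
    -- the Hessian is symmetric: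
    (hsymm : ∀ x y v w, ⟪Hyy x y v, w⟫ = ⟪v, Hyy x y w⟫)
    -- `y*` is differentiable with `∇_y g(x, y*(x)) = 0`:
    (ystar : EuclideanSpace ℝ (Fin d) → EuclideanSpace ℝ (Fin p))
    (hystar : Differentiable ℝ ystar)
    (hcrit : ∀ x, gy x (ystar x) = 0)
    -- the Hessian `∇²_{yy} g(x, y*(x))` is invertible, with inverse `Hinv x`:
    (Hinv : EuclideanSpace ℝ (Fin d) → (EuclideanSpace ℝ (Fin p) →L[ℝ] EuclideanSpace ℝ (Fin p)))
    (hinv1 : ∀ x, (Hyy x (ystar x)).comp (Hinv x) = ContinuousLinearMap.id ℝ _)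
    (hinv2 : ∀ x, (Hinv x).comp (Hyy x (ystar x)) = ContinuousLinearMap.id ℝ _) :
    ∀ x, HasGradientAt (fun x' => f x' (ystar x'))
      (fx x (ystar x)
        - ContinuousLinearMap.adjoint (Gyx x (ystar x)) (Hinv x (fy x (ystar x)))) x :=
  stmt_3_general f fx fy hf gy Gyx Hyy hgy' hsymm ystar hystar hcrit Hinv hinv1
end

section
/- Let g : ℝ^d × ℝ^p → ℝ be differentiable and let y* : ℝ^d → ℝ^p be a map such that for every x: (i) y*(x) is a minimizer of g(x,·) and the error-bound condition ‖∇_y g(x, y)‖ ≥ μ ‖y − y*(x)‖ holds for all y ∈ ℝ^p, with μ > 0; and (ii) the partial gradient ∇_y g is C_{gxy}-Lipschitz in x, i.e. ‖∇_y g(x₁, y) − ∇_y g(x₂, y)‖ ≤ C_{gxy} ‖x₁ − x₂‖ for all x₁, x₂ ∈ ℝ^d and y ∈ ℝ^p. Then y* is κ-Lipschitz with κ = C_{gxy}/μ: ‖y*(x₁) − y*(x₂)‖ ≤ κ ‖x₁ − x₂‖ for all x₁, x₂ ∈ ℝ^d. -/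
open scoped RealInnerProductSpace

/-- If `y*(x)` minimizes `g(x,·)`, the error-bound condition
`‖∇_y g(x,y)‖ ≥ μ ‖y − y*(x)‖` holds, and `∇_y g` is `C_gxy`-Lipschitz in `x`, then `y*` is
`κ`-Lipschitz with `κ = C_gxy/μ`. -/
theorem stmt_4 {d p : ℕ} (μ Cgxy : ℝ) (hμ : 0 < μ)
    (g : EuclideanSpace ℝ (Fin d) → EuclideanSpace ℝ (Fin p) → ℝ)
    (gy : EuclideanSpace ℝ (Fin d) → EuclideanSpace ℝ (Fin p) → EuclideanSpace ℝ (Fin p))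
    (hgy : ∀ x y, HasGradientAt (fun y' => g x y') (gy x y) y)
    (ystar : EuclideanSpace ℝ (Fin d) → EuclideanSpace ℝ (Fin p))
    (hmin : ∀ x y, g x (ystar x) ≤ g x y)
    (hEB : ∀ x y, ‖gy x y‖ ≥ μ * ‖y - ystar x‖)
    (hlipx : ∀ x₁ x₂ y, ‖gy x₁ y - gy x₂ y‖ ≤ Cgxy * ‖x₁ - x₂‖) :
    ∀ x₁ x₂, ‖ystar x₁ - ystar x₂‖ ≤ (Cgxy / μ) * ‖x₁ - x₂‖ := by
  have hzero : ∀ x, gy x (ystar x) = 0 := by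
    intro x
    have hlm : IsLocalMin (fun y' => g x y') (ystar x) :=
      Filter.Eventually.of_forall (fun y => hmin x y)
    have := hlm.hasFDerivAt_eq_zero (hgy x (ystar x)).hasFDerivAt
    have h2 := congrArg (InnerProductSpace.toDual ℝ (EuclideanSpace ℝ (Fin p))).symm this
    simpa using h2
  intro x₁ x₂
  have h1 : μ * ‖ystar x₂ - ystar x₁‖ ≤ ‖gy x₁ (ystar x₂)‖ := hEB x₁ (ystar x₂)
  have h2 : ‖gy x₁ (ystar x₂)‖ ≤ Cgxy * ‖x₁ - x₂‖ := by
    have := hlipx x₁ x₂ (ystar x₂)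
    rwa [hzero x₂, sub_zero] at this
  rw [norm_sub_rev, div_mul_eq_mul_div, le_div_iff₀ hμ, mul_comm]
  exact h1.trans h2
end

section
/- Let h : ℝ^d → ℝ be convex, let A ∈ ℝ^{d×d} be symmetric with A ⪰ ρ I_d for some ρ > 0, let γ > 0 and let w, x ∈ ℝ^d. Let x⁺ ∈ ℝ^d be a minimizer over ℝ^d of the function z ↦ ⟨w, z⟩ + (1/(2γ)) (z − x)ᵀ A (z − x) + h(z). Then ⟨w, x − x⁺⟩ ≥ (ρ/γ) ‖x⁺ − x‖² + h(x⁺) − h(x). -/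
open scoped RealInnerProductSpace
open Filter Topology Set

/-!
Test the minimality of `x⁺` against the points `x⁺ + t (x - x⁺)`, `0 < t ≤ 1`, of the segment
towards `x`. Convexity of `h` bounds `h` there by `(1 - t) h(x⁺) + t h(x)`, and the quadratic term
shrinks by the factor `(1 - t)²`; dividing by `t` gives
`⟨w, x - x⁺⟩ ≥ (2 - t)/(2γ) ⟨A u, u⟩ + h(x⁺) - h(x)` with `u = x⁺ - x`. Letting `t → 0⁺` yields
the bound with `⟨A u, u⟩ / γ ≥ (ρ/γ) ‖u‖²`.
-/

theorem le_of_forall_mem_Ioc_le_add_mul {a b c : ℝ} (h : ∀ t ∈ Ioc (0 : ℝ) 1, a ≤ c + t * b) :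
    a ≤ c := by
  have hcont : Continuous fun t : ℝ => c + t * b := by fun_prop
  have hlim : Tendsto (fun t : ℝ => c + t * b) (𝓝[>] 0) (𝓝 c) :=
    (hcont.tendsto' 0 c (by simp)).mono_left nhdsWithin_le_nhds
  exact ge_of_tendsto hlim (eventually_of_mem (Ioc_mem_nhdsGT zero_lt_one) h)

section Prox

variable {E : Type*} [NormedAddCommGroup E] [InnerProductSpace ℝ E]

noncomputable def proxObjective (γ : ℝ) (A : E →L[ℝ] E) (h : E → ℝ) (w x z : E) : ℝ :=
  ⟪w, z⟫ + (1 / (2 * γ)) * ⟪A (z - x), z - x⟫ + h z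

theorem proxObjective_segment_le {γ : ℝ} {h : E → ℝ} (hconv : ConvexOn ℝ univ h)
    (A : E →L[ℝ] E) (w x xp : E) {t : ℝ} (ht0 : 0 ≤ t) (ht1 : t ≤ 1) :
    proxObjective γ A h w x (xp + t • (x - xp)) ≤
      ⟪w, xp⟫ + t * ⟪w, x - xp⟫ + (1 - t) ^ 2 * ((1 / (2 * γ)) * ⟪A (xp - x), xp - x⟫)
        + ((1 - t) * h xp + t * h x) := by
  have hshift : xp + t • (x - xp) - x = (1 - t) • (xp - x) := by module
  have hconvex : h (xp + t • (x - xp)) ≤ (1 - t) * h xp + t * h x := by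
    have hcomb : (1 - t) • xp + t • x = xp + t • (x - xp) := by module
    simpa [hcomb] using
      hconv.2 (mem_univ xp) (mem_univ x) (sub_nonneg.2 ht1) ht0 (sub_add_cancel 1 t)
  have hquad : ⟪A ((1 - t) • (xp - x)), (1 - t) • (xp - x)⟫ =
      (1 - t) ^ 2 * ⟪A (xp - x), xp - x⟫ := by
    rw [map_smul, real_inner_smul_left, real_inner_smul_right]; ring
  rw [proxObjective, hshift, hquad, inner_add_right, real_inner_smul_right]
  linarith

theorem le_inner_sub_add_mul_of_isMinimizer {γ : ℝ} {h : E → ℝ} (hconv : ConvexOn ℝ univ h)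
    (A : E →L[ℝ] E) (w x xp : E)
    (hmin : ∀ z, proxObjective γ A h w x xp ≤ proxObjective γ A h w x z)
    {t : ℝ} (ht0 : 0 < t) (ht1 : t ≤ 1) :
    ⟪A (xp - x), xp - x⟫ / γ + (h xp - h x) ≤
      ⟪w, x - xp⟫ + t * (⟪A (xp - x), xp - x⟫ / (2 * γ)) := by
  have hseg := (hmin _).trans (proxObjective_segment_le hconv A w x xp ht0.le ht1)
  rw [proxObjective] at hseg
  -- `hseg` is `t` times the claim, since `1 - (1 - t)² = t (2 - t)`.
  refine le_of_mul_le_mul_left ?_ ht0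
  linear_combination hseg

end Prox

theorem stmt_6_general {d : ℕ} (ρ γ : ℝ) (hγ : 0 < γ)
    (h : EuclideanSpace ℝ (Fin d) → ℝ) (hconv : ConvexOn ℝ Set.univ h)
    (A : EuclideanSpace ℝ (Fin d) →L[ℝ] EuclideanSpace ℝ (Fin d))
    (hApos : ∀ v, ρ * ‖v‖ ^ 2 ≤ ⟪A v, v⟫)
    (w x xp : EuclideanSpace ℝ (Fin d))
    (hmin : ∀ z, ⟪w, xp⟫ + (1 / (2 * γ)) * ⟪A (xp - x), xp - x⟫ + h xp
      ≤ ⟪w, z⟫ + (1 / (2 * γ)) * ⟪A (z - x), z - x⟫ + h z) :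
    ⟪w, x - xp⟫ ≥ (ρ / γ) * ‖xp - x‖ ^ 2 + h xp - h x := by
  have hstep : ⟪A (xp - x), xp - x⟫ / γ + (h xp - h x) ≤ ⟪w, x - xp⟫ :=
    le_of_forall_mem_Ioc_le_add_mul fun t ht =>
      le_inner_sub_add_mul_of_isMinimizer hconv A w x xp hmin ht.1 ht.2
  have hcoercive : (ρ / γ) * ‖xp - x‖ ^ 2 ≤ ⟪A (xp - x), xp - x⟫ / γ := by
    rw [div_mul_eq_mul_div]
    exact div_le_div_of_nonneg_right (hApos _) hγ.le
  linarith

/-- If `x⁺` minimizes `z ↦ ⟨w, z⟩ + (1/2γ)(z−x)ᵀA(z−x) + h(z)` with `h`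
convex and `A` symmetric with `A ⪰ ρ I`, then
`⟨w, x − x⁺⟩ ≥ (ρ/γ)‖x⁺ − x‖² + h(x⁺) − h(x)`. -/
theorem stmt_6 {d : ℕ} (ρ γ : ℝ) (hρ : 0 < ρ) (hγ : 0 < γ)
    (h : EuclideanSpace ℝ (Fin d) → ℝ) (hconv : ConvexOn ℝ Set.univ h)
    (A : EuclideanSpace ℝ (Fin d) →L[ℝ] EuclideanSpace ℝ (Fin d))
    (hAsymm : ∀ v w, ⟪A v, w⟫ = ⟪v, A w⟫)
    (hApos : ∀ v, ρ * ‖v‖ ^ 2 ≤ ⟪A v, v⟫)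
    (w x xp : EuclideanSpace ℝ (Fin d))
    (hmin : ∀ z, ⟪w, xp⟫ + (1 / (2 * γ)) * ⟪A (xp - x), xp - x⟫ + h xp
      ≤ ⟪w, z⟫ + (1 / (2 * γ)) * ⟪A (z - x), z - x⟫ + h z) :
    ⟪w, x - xp⟫ ≥ (ρ / γ) * ‖xp - x‖ ^ 2 + h xp - h x :=
  stmt_6_general ρ γ hγ h hconv A hApos w x xp hmin
end

section
/- Let h : ℝ^d → ℝ be convex, F : ℝ^d → ℝ be differentiable with L_F-Lipschitz gradient, and set Φ = F + h. Let A ∈ ℝ^{d×d} be symmetric with A ⪰ ρ I_d (ρ > 0), let 0 < γ ≤ 3ρ/(4 L_F), let w, x ∈ ℝ^d, let x⁺ be a minimizer over ℝ^d of z ↦ ⟨w, z⟩ + (1/(2γ)) (z − x)ᵀ A (z − x) + h(z), and set 𝒢 = (x − x⁺)/γ. Then Φ(x⁺) ≤ Φ(x) − (3γρ/8) ‖𝒢‖² + (γ/ρ) ‖w − ∇F(x)‖². -/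
/-!
The estimate is the sum of two one-sided bounds. The descent lemma
`F(x⁺) ≤ F(x) + ⟪∇F(x), x⁺ - x⟫ + (L_F/2)‖x⁺ - x‖²` holds because the gap between `F` and this
quadratic model has nonpositive derivative along the segment from `x`. Testing the minimality of
`x⁺` at the points `x⁺ + t (x - x⁺)`, using convexity of `h` and letting `t → 0⁺`, gives
`h(x⁺) ≤ h(x) + ⟪w, x - x⁺⟫ - (1/γ)⟪A(x⁺ - x), x⁺ - x⟫`.
Adding them, the cross term `⟪∇F(x) - w, x⁺ - x⟫` is absorbed by Young's inequality, and
`A ⪰ ρI` together with `γ L_F ≤ 3ρ/4` leaves `-(3ρ/8γ)‖x⁺ - x‖² = -(3γρ/8)‖𝒢‖²`.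
-/

open scoped RealInnerProductSpace
open Filter Topology Set

section

variable {E : Type*} [NormedAddCommGroup E] [InnerProductSpace ℝ E]

theorem le_add_inner_add_half_mul_norm_sq [CompleteSpace E] {F : E → ℝ} {F' : E → E} {L : ℝ}
    {x : E}
    (hF : ∀ z, HasGradientAt F (F' z) z) (hL : ∀ z, ‖F' z - F' x‖ ≤ L * ‖z - x‖) (y : E) :
    F y ≤ F x + ⟪F' x, y - x⟫ + L / 2 * ‖y - x‖ ^ 2 := by
  set u := y - x
  let ψ : ℝ → ℝ := fun t => F (x + t • u) - t * ⟪F' x, u⟫ - L / 2 * t ^ 2 * ‖u‖ ^ 2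
  have hψ : ∀ t, HasDerivAt ψ (⟪F' (x + t • u) - F' x, u⟫ - L * t * ‖u‖ ^ 2) t := by
    intro t
    have hline : HasDerivAt (fun s : ℝ => x + s • u) u t := by
      simpa using ((hasDerivAt_id t).smul_const u).const_add x
    have hFline := (hF (x + t • u)).hasFDerivAt.comp_hasDerivAt t hline
    have := (hFline.sub ((hasDerivAt_id t).mul_const ⟪F' x, u⟫)).sub
      (((hasDerivAt_pow 2 t).const_mul (L / 2)).mul_const (‖u‖ ^ 2))
    refine this.congr_deriv ?_
    simp only [InnerProductSpace.toDual_apply_apply, inner_sub_left]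
    push_cast
    ring
  have hψ'_nonpos : ∀ t ∈ interior (Ici (0 : ℝ)),
      ⟪F' (x + t • u) - F' x, u⟫ - L * t * ‖u‖ ^ 2 ≤ 0 := by
    intro t ht
    rw [interior_Ici, mem_Ioi] at ht
    rw [sub_nonpos]
    calc ⟪F' (x + t • u) - F' x, u⟫ ≤ ‖F' (x + t • u) - F' x‖ * ‖u‖ := real_inner_le_norm _ _
      _ ≤ L * ‖t • u‖ * ‖u‖ := by
          gcongr
          simpa using hL (x + t • u)
      _ = L * t * ‖u‖ ^ 2 := by rw [norm_smul, Real.norm_of_nonneg ht.le]; ring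
  have hψ_anti : AntitoneOn ψ (Ici 0) :=
    antitoneOn_of_hasDerivWithinAt_nonpos (convex_Ici 0)
      (fun t _ => (hψ t).continuousAt.continuousWithinAt)
      (fun t _ => (hψ t).hasDerivWithinAt) hψ'_nonpos
  have hψ01 : ψ 1 ≤ ψ 0 := hψ_anti (mem_Ici.2 le_rfl) (mem_Ici.2 zero_le_one) zero_le_one
  simp only [ψ, u, one_smul, zero_smul, add_sub_cancel, add_zero] at hψ01
  linarith

theorem real_inner_le_mul_norm_sq_add_norm_sq_div (u v : E) {ε : ℝ} (hε : 0 < ε) :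
    ⟪u, v⟫ ≤ ε * ‖u‖ ^ 2 + ‖v‖ ^ 2 / (4 * ε) := by
  have hsq : ε * ‖u‖ ^ 2 + ‖v‖ ^ 2 / (4 * ε) - ‖u‖ * ‖v‖ = (2 * ε * ‖u‖ - ‖v‖) ^ 2 / (4 * ε) := by
    field_simp
    ring
  have : 0 ≤ (2 * ε * ‖u‖ - ‖v‖) ^ 2 / (4 * ε) := by positivity
  linarith [real_inner_le_norm u v]

theorem ConvexOn.add_two_mul_inner_le_of_isMinOn {φ : E → ℝ} (hφ : ConvexOn ℝ univ φ)
    (A : E →L[ℝ] E) (c : ℝ) {x xp : E}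
    (hmin : IsMinOn (fun z => φ z + c * ⟪A (z - x), z - x⟫) univ xp) :
    φ xp + 2 * c * ⟪A (xp - x), xp - x⟫ ≤ φ x := by
  set Q := ⟪A (xp - x), xp - x⟫
  have hstep : ∀ t ∈ Ioc (0 : ℝ) 1, φ xp + c * (2 - t) * Q ≤ φ x := by
    rintro t ⟨ht0, ht1⟩
    have hseg : t • x + (1 - t) • xp - x = (1 - t) • (xp - x) := by module
    have hconv := hφ.2 (mem_univ x) (mem_univ xp) ht0.le (sub_nonneg.2 ht1) (add_sub_cancel t 1)
    have hle := isMinOn_univ_iff.1 hmin (t • x + (1 - t) • xp)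
    rw [hseg, map_smul, real_inner_smul_left, real_inner_smul_right] at hle
    rw [smul_eq_mul, smul_eq_mul] at hconv
    have : t * (φ xp + c * (2 - t) * Q) ≤ t * φ x := by nlinarith
    exact le_of_mul_le_mul_left this ht0
  have hlim : Tendsto (fun t => φ xp + c * (2 - t) * Q) (𝓝[>] 0) (𝓝 (φ xp + 2 * c * Q)) := by
    have hcont : Continuous fun t : ℝ => φ xp + c * (2 - t) * Q := by fun_prop
    convert hcont.continuousWithinAt.tendsto using 2
    ring
  exact le_of_tendsto hlim (eventually_of_mem (Ioc_mem_nhdsGT one_pos) hstep)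

end

theorem stmt_7_general {d : ℕ} (ρ γ LF : ℝ) (hρ : 0 < ρ) (hLF : 0 < LF)
    (hγ : 0 < γ) (hγle : γ ≤ 3 * ρ / (4 * LF))
    (h : EuclideanSpace ℝ (Fin d) → ℝ) (hconv : ConvexOn ℝ Set.univ h)
    (F : EuclideanSpace ℝ (Fin d) → ℝ)
    (F' : EuclideanSpace ℝ (Fin d) → EuclideanSpace ℝ (Fin d))
    (hF : ∀ z, HasGradientAt F (F' z) z)
    (hFlip : ∀ z₁ z₂, ‖F' z₁ - F' z₂‖ ≤ LF * ‖z₁ - z₂‖)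
    (A : EuclideanSpace ℝ (Fin d) →L[ℝ] EuclideanSpace ℝ (Fin d))
    (hApos : ∀ v, ρ * ‖v‖ ^ 2 ≤ ⟪A v, v⟫)
    (w x xp : EuclideanSpace ℝ (Fin d))
    (hmin : ∀ z, ⟪w, xp⟫ + (1 / (2 * γ)) * ⟪A (xp - x), xp - x⟫ + h xp
      ≤ ⟪w, z⟫ + (1 / (2 * γ)) * ⟪A (z - x), z - x⟫ + h z) :
    F xp + h xp ≤ F x + h x - (3 * γ * ρ / 8) * ‖γ⁻¹ • (x - xp)‖ ^ 2
      + (γ / ρ) * ‖w - F' x‖ ^ 2 := by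
  have hopt := ((innerₛₗ ℝ w).convexOn convex_univ |>.add hconv).add_two_mul_inner_le_of_isMinOn
    A (1 / (2 * γ)) (isMinOn_univ_iff.2 fun z => by
      simpa only [Pi.add_apply, innerₛₗ_apply_apply, add_right_comm] using hmin z)
  have hdesc := le_add_inner_add_half_mul_norm_sq hF (fun z => hFlip z x) xp
  have hL : LF / 2 ≤ 3 * ρ / (8 * γ) := by
    rw [le_div_iff₀ (by positivity)] at hγle ⊢
    linarith
  have hyoung := real_inner_le_mul_norm_sq_add_norm_sq_div (F' x - w) (xp - x) (div_pos hγ hρ)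
  rw [norm_sub_rev (F' x)] at hyoung
  have hQ : ρ * ‖xp - x‖ ^ 2 / γ ≤ 2 * (1 / (2 * γ)) * ⟪A (xp - x), xp - x⟫ :=
    calc ρ * ‖xp - x‖ ^ 2 / γ ≤ ⟪A (xp - x), xp - x⟫ / γ := by gcongr; exact hApos _
      _ = 2 * (1 / (2 * γ)) * ⟪A (xp - x), xp - x⟫ := by field_simp
  calc F xp + h xp
      ≤ F x + h x + ⟪F' x - w, xp - x⟫ + LF / 2 * ‖xp - x‖ ^ 2 - ρ * ‖xp - x‖ ^ 2 / γ := by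
        simp only [Pi.add_apply, innerₛₗ_apply_apply] at hopt
        rw [inner_sub_left, inner_sub_right w]
        linarith
    _ ≤ F x + h x + (γ / ρ * ‖w - F' x‖ ^ 2 + ‖xp - x‖ ^ 2 / (4 * (γ / ρ)))
        + 3 * ρ / (8 * γ) * ‖xp - x‖ ^ 2 - ρ * ‖xp - x‖ ^ 2 / γ := by gcongr
    _ = F x + h x - (3 * γ * ρ / 8) * ‖γ⁻¹ • (x - xp)‖ ^ 2 + (γ / ρ) * ‖w - F' x‖ ^ 2 := by
        rw [norm_smul, norm_inv, Real.norm_of_nonneg hγ.le, norm_sub_rev x]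
        field_simp
        ring

/-- One-step descent for the proximal mirror step: with `h` convex, `F`
differentiable with `L_F`-Lipschitz gradient, `Φ = F + h`, `A ⪰ ρ I` symmetric,
`0 < γ ≤ 3ρ/(4L_F)`, and `x⁺` a minimizer of `z ↦ ⟨w,z⟩ + (1/2γ)(z−x)ᵀA(z−x) + h(z)`,
setting `𝒢 = (x − x⁺)/γ` one has
`Φ(x⁺) ≤ Φ(x) − (3γρ/8)‖𝒢‖² + (γ/ρ)‖w − ∇F(x)‖²`. -/
theorem stmt_7 {d : ℕ} (ρ γ LF : ℝ) (hρ : 0 < ρ) (hLF : 0 < LF)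
    (hγ : 0 < γ) (hγle : γ ≤ 3 * ρ / (4 * LF))
    (h : EuclideanSpace ℝ (Fin d) → ℝ) (hconv : ConvexOn ℝ Set.univ h)
    (F : EuclideanSpace ℝ (Fin d) → ℝ)
    (F' : EuclideanSpace ℝ (Fin d) → EuclideanSpace ℝ (Fin d))
    (hF : ∀ z, HasGradientAt F (F' z) z)
    (hFlip : ∀ z₁ z₂, ‖F' z₁ - F' z₂‖ ≤ LF * ‖z₁ - z₂‖)
    (A : EuclideanSpace ℝ (Fin d) →L[ℝ] EuclideanSpace ℝ (Fin d))
    (hAsymm : ∀ v w, ⟪A v, w⟫ = ⟪v, A w⟫)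
    (hApos : ∀ v, ρ * ‖v‖ ^ 2 ≤ ⟪A v, v⟫)
    (w x xp : EuclideanSpace ℝ (Fin d))
    (hmin : ∀ z, ⟪w, xp⟫ + (1 / (2 * γ)) * ⟪A (xp - x), xp - x⟫ + h xp
      ≤ ⟪w, z⟫ + (1 / (2 * γ)) * ⟪A (z - x), z - x⟫ + h z) :
    F xp + h xp ≤ F x + h x - (3 * γ * ρ / 8) * ‖γ⁻¹ • (x - xp)‖ ^ 2
      + (γ / ρ) * ‖w - F' x‖ ^ 2 :=
  stmt_7_general ρ γ LF hρ hLF hγ hγle h hconv F F' hF hFlip A hApos w x xp hmin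
end

section
/- Let h : ℝ^d → ℝ be convex, let A ∈ ℝ^{d×d} be symmetric with A ⪰ ρ I_d (ρ > 0), let γ > 0 and x ∈ ℝ^d. For u ∈ ℝ^d, let prox(u) denote the unique minimizer over ℝ^d of z ↦ ⟨u, z⟩ + (1/(2γ)) (z − x)ᵀ A (z − x) + h(z), and define the gradient mapping 𝒢(x, u, γ) = (x − prox(u))/γ. Then for all u, w ∈ ℝ^d, ‖𝒢(x, u, γ) − 𝒢(x, w, γ)‖ ≤ (1/ρ) ‖u − w‖; consequently ‖𝒢(x, u, γ)‖² ≤ 2 ‖𝒢(x, w, γ)‖² + (2/ρ²) ‖u − w‖². -/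
open scoped RealInnerProductSpace

set_option maxHeartbeats 1000000 in
/-- Lipschitz continuity of the gradient mapping in its gradient argument:
if `prox u` minimizes `z ↦ ⟨u,z⟩ + (1/2γ)(z−x)ᵀA(z−x) + h(z)` with `h` convex and
`A ⪰ ρ I` symmetric, and `𝒢(x,u,γ) = (x − prox u)/γ`, then
`‖𝒢(x,u,γ) − 𝒢(x,w,γ)‖ ≤ (1/ρ)‖u − w‖`, and consequently
`‖𝒢(x,u,γ)‖² ≤ 2‖𝒢(x,w,γ)‖² + (2/ρ²)‖u − w‖²`. -/
theorem stmt_9 {d : ℕ} (ρ γ : ℝ) (hρ : 0 < ρ) (hγ : 0 < γ)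
    (h : EuclideanSpace ℝ (Fin d) → ℝ) (hconv : ConvexOn ℝ Set.univ h)
    (A : EuclideanSpace ℝ (Fin d) →L[ℝ] EuclideanSpace ℝ (Fin d))
    (hAsymm : ∀ v w, ⟪A v, w⟫ = ⟪v, A w⟫)
    (hApos : ∀ v, ρ * ‖v‖ ^ 2 ≤ ⟪A v, v⟫)
    (x : EuclideanSpace ℝ (Fin d))
    (prox : EuclideanSpace ℝ (Fin d) → EuclideanSpace ℝ (Fin d))
    (hmin : ∀ u z, ⟪u, prox u⟫ + (1 / (2 * γ)) * ⟪A (prox u - x), prox u - x⟫ + h (prox u)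
      ≤ ⟪u, z⟫ + (1 / (2 * γ)) * ⟪A (z - x), z - x⟫ + h z) :
    ∀ u w,
      ‖γ⁻¹ • (x - prox u) - γ⁻¹ • (x - prox w)‖ ≤ (1 / ρ) * ‖u - w‖ ∧
      ‖γ⁻¹ • (x - prox u)‖ ^ 2 ≤ 2 * ‖γ⁻¹ • (x - prox w)‖ ^ 2 + (2 / ρ ^ 2) * ‖u - w‖ ^ 2 := by
  -- quadratic combination identity
  have combo : ∀ (a b : EuclideanSpace ℝ (Fin d)) (t : ℝ),
      ⟪A ((1 - t) • a + t • b), (1 - t) • a + t • b⟫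
        = (1 - t) * ⟪A a, a⟫ + t * ⟪A b, b⟫ - t * (1 - t) * ⟪A (a - b), a - b⟫ := by
    intro a b t
    have hba : ⟪A b, a⟫ = ⟪A a, b⟫ := by
      rw [hAsymm b a, real_inner_comm]
    simp only [map_add, map_smul, map_sub, inner_add_left, inner_add_right,
      inner_sub_left, inner_sub_right, real_inner_smul_left, real_inner_smul_right,
      smul_eq_mul]
    rw [hba]; ring
  -- strong minimality
  have strong : ∀ v z,
      (⟪v, prox v⟫ + (1 / (2 * γ)) * ⟪A (prox v - x), prox v - x⟫ + h (prox v))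
        + (ρ / (2 * γ)) * ‖prox v - z‖ ^ 2
      ≤ ⟪v, z⟫ + (1 / (2 * γ)) * ⟪A (z - x), z - x⟫ + h z := by
    intro v z
    set p := prox v with hp
    set c : ℝ := (1 / (2 * γ)) * ⟪A (p - z), p - z⟫ with hc
    have hc0 : (ρ / (2 * γ)) * ‖p - z‖ ^ 2 ≤ c := by
      have hA := hApos (p - z)
      have heq : ρ / (2 * γ) * ‖p - z‖ ^ 2 = (1 / (2 * γ)) * (ρ * ‖p - z‖ ^ 2) := by ring
      rw [hc, heq]
      exact mul_le_mul_of_nonneg_left hA (by positivity)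
    have key : ∀ t : ℝ, 0 < t → t < 1 →
        (⟪v, p⟫ + (1 / (2 * γ)) * ⟪A (p - x), p - x⟫ + h p)
          ≤ (⟪v, z⟫ + (1 / (2 * γ)) * ⟪A (z - x), z - x⟫ + h z) - (1 - t) * c := by
      intro t ht0 ht1
      set zt : EuclideanSpace ℝ (Fin d) := (1 - t) • p + t • z with hzt
      have hmin' := hmin v zt
      rw [← hp] at hmin'
      have hinner : ⟪v, zt⟫ = (1 - t) * ⟪v, p⟫ + t * ⟪v, z⟫ := by
        rw [hzt, inner_add_right, real_inner_smul_right, real_inner_smul_right]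
      have hsub : zt - x = (1 - t) • (p - x) + t • (z - x) := by
        rw [hzt]; module
      have hquad : ⟪A (zt - x), zt - x⟫
          = (1 - t) * ⟪A (p - x), p - x⟫ + t * ⟪A (z - x), z - x⟫
            - t * (1 - t) * ⟪A (p - z), p - z⟫ := by
        rw [hsub, combo]
        have : p - x - (z - x) = p - z := by abel
        rw [this]
      have hh : h zt ≤ (1 - t) * h p + t * h z := by
        have := hconv.2 (Set.mem_univ p) (Set.mem_univ z) (by linarith : (0:ℝ) ≤ 1 - t)
          (le_of_lt ht0) (by ring)
        simpa [hzt] using this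
      have hstep : ⟪v, zt⟫ + (1 / (2 * γ)) * ⟪A (zt - x), zt - x⟫ + h zt
          ≤ (1 - t) * (⟪v, p⟫ + (1 / (2 * γ)) * ⟪A (p - x), p - x⟫ + h p)
              + t * (⟪v, z⟫ + (1 / (2 * γ)) * ⟪A (z - x), z - x⟫ + h z)
              - t * (1 - t) * c := by
        rw [hinner, hquad, hc]
        nlinarith [hh]
      have hfin := le_trans hmin' hstep
      nlinarith [hfin]
    have lim : (⟪v, p⟫ + (1 / (2 * γ)) * ⟪A (p - x), p - x⟫ + h p)
        ≤ (⟪v, z⟫ + (1 / (2 * γ)) * ⟪A (z - x), z - x⟫ + h z) - c := by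
      rw [le_sub_iff_add_le]
      apply le_of_forall_pos_le_add
      intro ε hε
      have hcnn : 0 ≤ c := le_trans (by positivity) hc0
      set t : ℝ := min (1/2) (ε / (c + 1)) with htdef
      have ht0 : 0 < t := lt_min (by norm_num) (by positivity)
      have ht1 : t < 1 := lt_of_le_of_lt (min_le_left _ _) (by norm_num)
      have htc : t * c ≤ ε := by
        calc t * c ≤ (ε / (c + 1)) * c :=
              mul_le_mul_of_nonneg_right (min_le_right _ _) hcnn
          _ ≤ ε := by
              rw [div_mul_eq_mul_div, div_le_iff₀ (by linarith)]
              nlinarith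
      have := key t ht0 ht1
      linarith
    linarith [hc0]
  -- main argument
  intro u w
  set p := prox u
  set q := prox w
  have h1 := strong u q
  have h2 := strong w p
  have hnpq : ‖p - q‖ = ‖q - p‖ := by rw [norm_sub_rev]
  have hmono : (ρ / γ) * ‖p - q‖ ^ 2 ≤ ⟪u - w, q - p⟫ := by
    have hi : ⟪u, q⟫ - ⟪u, p⟫ + ⟪w, p⟫ - ⟪w, q⟫ = ⟪u - w, q - p⟫ := by
      rw [inner_sub_left, inner_sub_right, inner_sub_right]; ring
    rw [← hi]
    rw [hnpq] at h1 ⊢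
    have hργ : ρ / γ = ρ / (2 * γ) + ρ / (2 * γ) := by
      field_simp; ring
    rw [hργ]
    linarith [h1, h2]
  have hlip : ‖p - q‖ ≤ (γ / ρ) * ‖u - w‖ := by
    have hcs : ⟪u - w, q - p⟫ ≤ ‖u - w‖ * ‖q - p‖ := real_inner_le_norm _ _
    rw [← hnpq] at hcs
    rcases eq_or_lt_of_le (norm_nonneg (p - q)) with h0 | h0
    · rw [← h0]; positivity
    · have h3 : (ρ / γ) * ‖p - q‖ ≤ ‖u - w‖ := by
        have h4 := le_trans hmono hcs
        have hpos : 0 < ρ / γ := by positivity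
        nlinarith [h4, h0]
      calc ‖p - q‖ = (γ / ρ) * ((ρ / γ) * ‖p - q‖) := by field_simp
        _ ≤ (γ / ρ) * ‖u - w‖ := mul_le_mul_of_nonneg_left h3 (by positivity)
  have hGdiff : γ⁻¹ • (x - p) - γ⁻¹ • (x - q) = γ⁻¹ • (q - p) := by
    rw [← smul_sub]; congr 1; abel
  have hG : ‖γ⁻¹ • (x - p) - γ⁻¹ • (x - q)‖ ≤ (1 / ρ) * ‖u - w‖ := by
    rw [hGdiff, norm_smul, Real.norm_eq_abs, abs_of_pos (by positivity : (0:ℝ) < γ⁻¹),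
      ← hnpq]
    calc γ⁻¹ * ‖p - q‖ ≤ γ⁻¹ * ((γ / ρ) * ‖u - w‖) :=
          mul_le_mul_of_nonneg_left hlip (by positivity)
      _ = (1 / ρ) * ‖u - w‖ := by field_simp
  refine ⟨hG, ?_⟩
  have htri : ‖γ⁻¹ • (x - p)‖ ≤ ‖γ⁻¹ • (x - q)‖ + ‖γ⁻¹ • (x - p) - γ⁻¹ • (x - q)‖ :=
    norm_le_norm_add_norm_sub' _ _
  have hnn : (0:ℝ) ≤ ‖γ⁻¹ • (x - p) - γ⁻¹ • (x - q)‖ := norm_nonneg _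
  have hnn2 : (0:ℝ) ≤ ‖γ⁻¹ • (x - q)‖ := norm_nonneg _
  have hnn3 : (0:ℝ) ≤ ‖γ⁻¹ • (x - p)‖ := norm_nonneg _
  have hsq : ‖γ⁻¹ • (x - p) - γ⁻¹ • (x - q)‖ ^ 2 ≤ ((1/ρ) * ‖u - w‖) ^ 2 :=
    sq_le_sq' (by linarith) hG
  have hid : ((1/ρ) * ‖u - w‖)^2 = (1 / ρ^2) * ‖u - w‖^2 := by ring
  have hmul : ‖γ⁻¹ • (x - p)‖ * ‖γ⁻¹ • (x - p)‖
      ≤ (‖γ⁻¹ • (x - q)‖ + ‖γ⁻¹ • (x - p) - γ⁻¹ • (x - q)‖)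
        * (‖γ⁻¹ • (x - q)‖ + ‖γ⁻¹ • (x - p) - γ⁻¹ • (x - q)‖) :=
    mul_self_le_mul_self hnn3 htri
  have hmulp : ‖γ⁻¹ • (x - p)‖ ^ 2
      ≤ (‖γ⁻¹ • (x - q)‖ + ‖γ⁻¹ • (x - p) - γ⁻¹ • (x - q)‖) ^ 2 := by
    rw [sq, sq]; exact hmul
  have hsq2 := hid ▸ hsq
  have hgoal : (2 / ρ ^ 2) * ‖u - w‖ ^ 2 = 2 * ((1 / ρ ^ 2) * ‖u - w‖ ^ 2) := by ring
  rw [hgoal]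
  nlinarith [hsq2, hmulp, sq_nonneg (‖γ⁻¹ • (x - q)‖ - ‖γ⁻¹ • (x - p) - γ⁻¹ • (x - q)‖)]
end

section
/- Let g : ℝ^d × ℝ^p → ℝ be differentiable such that ∇_y g is L_g-Lipschitz in each variable (‖∇_y g(x, y₁) − ∇_y g(x, y₂)‖ ≤ L_g ‖y₁ − y₂‖ and ‖∇_y g(x₁, y) − ∇_y g(x₂, y)‖ ≤ L_g ‖x₁ − x₂‖), and suppose that for every x' ∈ ℝ^d the function g(x', ·) attains its infimum G(x') and satisfies the μ-PL condition ‖∇_y g(x', y)‖² ≥ 2μ (g(x', y) − G(x')) for all y, with μ > 0. Let B ∈ ℝ^{p×p} be symmetric with ρ_l I_p ⪯ B ⪯ ρ_u I_p where ρ_l, ρ_u > 0 and ρ_l ρ_u ≥ 1, let λ > 0, v ∈ ℝ^p, y ∈ ℝ^p, x, x' ∈ ℝ^d, and set y⁺ = y − λ B^{-1} v. Then g(x', y⁺) − G(x') ≤ (1 − λμ/ρ_u) (g(x', y) − G(x')) − (1/(2λρ_u) − L_g/2) ‖y⁺ − y‖² + (λ L_g²/ρ_l) ‖x' − x‖² +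 (λ/ρ_l) ‖∇_y g(x, y) − v‖². -/
open scoped RealInnerProductSpace

/-!
With `δ = y - y⁺` we have `B δ = λ v`. The descent lemma for the `L_g`-smooth function
`g(x', ·)` gives `g(x', y⁺) ≤ g(x', y) - ⟪∇, δ⟫ + L_g/2 ‖δ‖²` with `∇ = ∇_y g(x', y)`.
Through the `B⁻¹`-norm, `2⟪∇, δ⟫ = λ (‖∇‖²_{B⁻¹} + ‖v‖²_{B⁻¹} - ‖∇ - v‖²_{B⁻¹})`, and comparing
`B⁻¹`-norms with Euclidean ones via `ρ_l ⪯ B ⪯ ρ_u` and `ρ_l ≥ 1/ρ_u` yields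
`⟪∇, δ⟫ ≥ λ/(2ρ_u) ‖∇‖² + 1/(2λρ_u) ‖δ‖² - λ/(2ρ_l) ‖∇ - v‖²`.
The PL inequality bounds `‖∇‖²` below by `2μ (g(x', y) - G(x'))`, and the Lipschitz continuity
in `x` gives `‖∇ - v‖² ≤ 2 L_g² ‖x' - x‖² + 2 ‖∇_y g(x, y) - v‖²`.
-/

section Descent

variable {E : Type*} [NormedAddCommGroup E] [InnerProductSpace ℝ E] [CompleteSpace E]

theorem le_add_inner_add_sq_of_lipschitz_gradient {f : E → ℝ} {f' : E → E} {L : ℝ}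
    (hf : ∀ z, HasGradientAt f (f' z) z) (hlip : ∀ z₁ z₂, ‖f' z₁ - f' z₂‖ ≤ L * ‖z₁ - z₂‖)
    (a b : E) : f b ≤ f a + ⟪f' a, b - a⟫ + L / 2 * ‖b - a‖ ^ 2 := by
  set δ := b - a
  let φ : ℝ → ℝ := fun t => f (a + t • δ) - t * ⟪f' a, δ⟫ - t ^ 2 * (L / 2 * ‖δ‖ ^ 2)
  have hφ : ∀ t, HasDerivAt φ (⟪f' (a + t • δ) - f' a, δ⟫ - t * (L * ‖δ‖ ^ 2)) t := by
    intro t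
    have hline : HasDerivAt (fun s : ℝ => a + s • δ) δ t := by
      simpa using ((hasDerivAt_id t).smul_const δ).const_add a
    have hcomp := (hf (a + t • δ)).hasFDerivAt.comp_hasDerivAt t hline
    refine ((hcomp.sub ((hasDerivAt_id t).mul_const ⟪f' a, δ⟫)).sub
      ((hasDerivAt_pow 2 t).mul_const (L / 2 * ‖δ‖ ^ 2))).congr_deriv ?_
    simp only [InnerProductSpace.toDual_apply_apply, inner_sub_left]
    ring
  have hφ_nonpos : ∀ t ∈ interior (Set.Icc (0 : ℝ) 1),
      ⟪f' (a + t • δ) - f' a, δ⟫ - t * (L * ‖δ‖ ^ 2) ≤ 0 := by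
    intro t ht
    rw [interior_Icc] at ht
    have hlip_t : ‖f' (a + t • δ) - f' a‖ ≤ L * (t * ‖δ‖) := by
      simpa [norm_smul, abs_of_pos ht.1] using hlip (a + t • δ) a
    nlinarith [real_inner_le_norm (f' (a + t • δ) - f' a) δ,
      mul_le_mul_of_nonneg_right hlip_t (norm_nonneg δ)]
  have hanti : AntitoneOn φ (Set.Icc 0 1) :=
    antitoneOn_of_hasDerivWithinAt_nonpos (convex_Icc 0 1)
      (fun t _ => (hφ t).continuousAt.continuousWithinAt)
      (fun t _ => (hφ t).hasDerivWithinAt) hφ_nonpos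
  have hφ_le : φ 1 ≤ φ 0 :=
    hanti (Set.left_mem_Icc.mpr zero_le_one) (Set.right_mem_Icc.mpr zero_le_one) zero_le_one
  simp only [φ, δ, zero_smul, add_zero, one_smul, add_sub_cancel] at hφ_le
  linarith

end Descent

section QuadraticFormBounds

variable {F : Type*} [NormedAddCommGroup F] [InnerProductSpace ℝ F] {B : F →ₗ[ℝ] F} {ρl ρu : ℝ}

theorem sq_norm_map_le_mul_inner_map_self (hB : B.IsSymmetric) (hpos : ∀ u, 0 ≤ ⟪B u, u⟫)
    (hρu : 0 < ρu) (hBu : ∀ u, ⟪B u, u⟫ ≤ ρu * ‖u‖ ^ 2) (z : F) :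
    ‖B z‖ ^ 2 ≤ ρu * ⟪B z, z⟫ := by
  -- test positivity of the form on `ρu z - B z`, then bound `⟪B (B z), B z⟫` by `ρu ‖B z‖²`
  have hexpand : ⟪B (ρu • z - B z), ρu • z - B z⟫
      = ρu ^ 2 * ⟪B z, z⟫ - 2 * ρu * ‖B z‖ ^ 2 + ⟪B (B z), B z⟫ := by
    have hsymm : ⟪B (B z), z⟫ = ‖B z‖ ^ 2 := by
      rw [hB, real_inner_self_eq_norm_sq]
    simp only [map_sub, map_smul, inner_sub_left, inner_sub_right, real_inner_smul_left,
      real_inner_smul_right, hsymm, real_inner_comm z (B z), real_inner_self_eq_norm_sq]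
    ring
  nlinarith [hpos (ρu • z - B z), hBu (B z)]

theorem mul_inner_map_self_le_sq_norm_map (hρl : 0 ≤ ρl)
    (hBl : ∀ u, ρl * ‖u‖ ^ 2 ≤ ⟪B u, u⟫) (z : F) :
    ρl * ⟪B z, z⟫ ≤ ‖B z‖ ^ 2 := by
  have hexpand : ‖B z‖ ^ 2 - ρl * ⟪B z, z⟫
      = ‖B z - ρl • z‖ ^ 2 + ρl * (⟪B z, z⟫ - ρl * ‖z‖ ^ 2) := by
    simp only [@norm_sub_sq_real, real_inner_smul_right, norm_smul, Real.norm_eq_abs,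
      mul_pow, sq_abs]
    ring
  nlinarith [sq_nonneg ‖B z - ρl • z‖, mul_nonneg hρl (sub_nonneg.2 (hBl z))]

theorem LinearMap.surjective_of_coercive [FiniteDimensional ℝ F] (hρl : 0 < ρl)
    (hBl : ∀ u, ρl * ‖u‖ ^ 2 ≤ ⟪B u, u⟫) : Function.Surjective B := by
  refine LinearMap.injective_iff_surjective.mp ((injective_iff_map_eq_zero B).2 fun u hu => ?_)
  have := hBl u
  rw [hu, inner_zero_left] at this
  exact norm_eq_zero.1 (pow_eq_zero_iff two_ne_zero |>.1 (by nlinarith [sq_nonneg ‖u‖]))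

theorem sq_norm_div_sub_two_inner_add_le [FiniteDimensional ℝ F] (hB : B.IsSymmetric)
    (hρl : 0 < ρl) (hρu : 0 < ρu) (hBl : ∀ u, ρl * ‖u‖ ^ 2 ≤ ⟪B u, u⟫)
    (hBu : ∀ u, ⟪B u, u⟫ ≤ ρu * ‖u‖ ^ 2) (w δ : F) :
    ‖w‖ ^ 2 / ρu - 2 * ⟪w, δ⟫ + ρl * ‖δ‖ ^ 2 ≤ ‖w - B δ‖ ^ 2 / ρl := by
  obtain ⟨z, rfl⟩ := LinearMap.surjective_of_coercive hρl hBl w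
  have hpos : ∀ u, 0 ≤ ⟪B u, u⟫ := fun u => (by positivity : 0 ≤ ρl * ‖u‖ ^ 2).trans (hBl u)
  have hexpand : ⟪B (z - δ), z - δ⟫ = ⟪B z, z⟫ - 2 * ⟪B z, δ⟫ + ⟪B δ, δ⟫ := by
    simp only [map_sub, inner_sub_left, inner_sub_right, hB δ z, real_inner_comm δ (B z)]
    ring
  have hz : ‖B z‖ ^ 2 / ρu ≤ ⟪B z, z⟫ :=
    (div_le_iff₀' hρu).2 (sq_norm_map_le_mul_inner_map_self hB hpos hρu hBu z)
  have hzδ : ⟪B (z - δ), z - δ⟫ ≤ ‖B z - B δ‖ ^ 2 / ρl := by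
    rw [le_div_iff₀' hρl, ← map_sub]
    exact mul_inner_map_self_le_sq_norm_map hρl.le hBl (z - δ)
  linarith [hBl δ]

theorem inner_lower_bound_of_preconditioned_step [FiniteDimensional ℝ F] (hB : B.IsSymmetric)
    (hρl : 0 < ρl) (hρu : 0 < ρu) (hρlu : 1 ≤ ρl * ρu) (hBl : ∀ u, ρl * ‖u‖ ^ 2 ≤ ⟪B u, u⟫)
    (hBu : ∀ u, ⟪B u, u⟫ ≤ ρu * ‖u‖ ^ 2) {lam : ℝ} (hlam : 0 < lam) {v δ : F}
    (hδ : B δ = lam • v) (w : F) :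
    lam / (2 * ρu) * ‖w‖ ^ 2 + 1 / (2 * lam * ρu) * ‖δ‖ ^ 2
      ≤ ⟪w, δ⟫ + lam / (2 * ρl) * ‖w - v‖ ^ 2 := by
  have key := sq_norm_div_sub_two_inner_add_le hB hρl hρu hBl hBu (lam • w) δ
  rw [hδ, ← smul_sub, norm_smul, norm_smul, real_inner_smul_left, Real.norm_eq_abs,
    abs_of_pos hlam, mul_pow, mul_pow] at key
  have hδ_norm : ‖δ‖ ^ 2 / ρu ≤ ρl * ‖δ‖ ^ 2 := by
    rw [div_le_iff₀ hρu]
    nlinarith [sq_nonneg ‖δ‖]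
  calc lam / (2 * ρu) * ‖w‖ ^ 2 + 1 / (2 * lam * ρu) * ‖δ‖ ^ 2
      = 1 / (2 * lam) * (lam ^ 2 * ‖w‖ ^ 2 / ρu + ‖δ‖ ^ 2 / ρu) := by
        field_simp
    _ ≤ 1 / (2 * lam) * (2 * (lam * ⟪w, δ⟫) + lam ^ 2 * ‖w - v‖ ^ 2 / ρl) := by
        exact mul_le_mul_of_nonneg_left (by linarith) (by positivity)
    _ = ⟪w, δ⟫ + lam / (2 * ρl) * ‖w - v‖ ^ 2 := by
        field_simp

end QuadraticFormBounds

theorem stmt_10_general {d p : ℕ} (μ Lg ρl ρu lam : ℝ)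
    (hlam : 0 < lam) (hρl : 0 < ρl) (hρu : 0 < ρu) (hρlu : 1 ≤ ρl * ρu)
    (g : EuclideanSpace ℝ (Fin d) → EuclideanSpace ℝ (Fin p) → ℝ)
    (gy : EuclideanSpace ℝ (Fin d) → EuclideanSpace ℝ (Fin p) → EuclideanSpace ℝ (Fin p))
    (hgy : ∀ x y, HasGradientAt (fun y' => g x y') (gy x y) y)
    (hlipy : ∀ x y₁ y₂, ‖gy x y₁ - gy x y₂‖ ≤ Lg * ‖y₁ - y₂‖)
    (hlipx : ∀ x₁ x₂ y, ‖gy x₁ y - gy x₂ y‖ ≤ Lg * ‖x₁ - x₂‖)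
    (G : EuclideanSpace ℝ (Fin d) → ℝ)
    (hPL : ∀ x y, ‖gy x y‖ ^ 2 ≥ 2 * μ * (g x y - G x))
    (B : EuclideanSpace ℝ (Fin p) →L[ℝ] EuclideanSpace ℝ (Fin p))
    (hBsymm : ∀ v w, ⟪B v, w⟫ = ⟪v, B w⟫)
    (hBl : ∀ v, ρl * ‖v‖ ^ 2 ≤ ⟪B v, v⟫) (hBu : ∀ v, ⟪B v, v⟫ ≤ ρu * ‖v‖ ^ 2)
    (v y yp : EuclideanSpace ℝ (Fin p)) (x x' : EuclideanSpace ℝ (Fin d))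
    (hupd : B (y - yp) = lam • v) :
    g x' yp - G x' ≤ (1 - lam * μ / ρu) * (g x' y - G x')
      - (1 / (2 * lam * ρu) - Lg / 2) * ‖yp - y‖ ^ 2
      + (lam * Lg ^ 2 / ρl) * ‖x' - x‖ ^ 2
      + (lam / ρl) * ‖gy x y - v‖ ^ 2 := by
  have hdescent : g x' yp ≤ g x' y - ⟪gy x' y, y - yp⟫ + Lg / 2 * ‖y - yp‖ ^ 2 := by
    have := le_add_inner_add_sq_of_lipschitz_gradient (hgy x') (hlipy x') y yp
    rwa [← neg_sub y yp, inner_neg_right, ← sub_eq_add_neg, norm_neg] at this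
  have hstep := inner_lower_bound_of_preconditioned_step
    (B := (B : EuclideanSpace ℝ (Fin p) →ₗ[ℝ] EuclideanSpace ℝ (Fin p))) hBsymm hρl hρu
    hρlu hBl hBu hlam hupd (gy x' y)
  have hPL_step : lam * μ / ρu * (g x' y - G x') ≤ lam / (2 * ρu) * ‖gy x' y‖ ^ 2 :=
    calc lam * μ / ρu * (g x' y - G x') = lam / (2 * ρu) * (2 * μ * (g x' y - G x')) := by
          field_simp
      _ ≤ lam / (2 * ρu) * ‖gy x' y‖ ^ 2 := by gcongr; exact hPL x' y
  have herror : lam / (2 * ρl) * ‖gy x' y - v‖ ^ 2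
      ≤ lam * Lg ^ 2 / ρl * ‖x' - x‖ ^ 2 + lam / ρl * ‖gy x y - v‖ ^ 2 := by
    have htri : ‖gy x' y - v‖ ≤ Lg * ‖x' - x‖ + ‖gy x y - v‖ :=
      (norm_sub_le_norm_sub_add_norm_sub _ (gy x y) _).trans (by gcongr; exact hlipx x' x y)
    calc lam / (2 * ρl) * ‖gy x' y - v‖ ^ 2
        ≤ lam / (2 * ρl) * (2 * ((Lg * ‖x' - x‖) ^ 2 + ‖gy x y - v‖ ^ 2)) := by
          gcongr
          exact (pow_le_pow_left₀ (norm_nonneg _) htri 2).trans (add_sq_le ..)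
      _ = lam * Lg ^ 2 / ρl * ‖x' - x‖ ^ 2 + lam / ρl * ‖gy x y - v‖ ^ 2 := by
          field_simp
  rw [norm_sub_rev yp y]
  linarith

/-- One step of the adaptive mirror descent on the lower-level variable:
with `g(x',·)` attaining its infimum `G(x')` and satisfying the `μ`-PL condition, `∇_y g`
`L_g`-Lipschitz in each variable, `B` symmetric with `ρ_l I ⪯ B ⪯ ρ_u I` (`ρ_l ρ_u ≥ 1`),
and `y⁺ = y − λ B⁻¹ v` (encoded as `B (y − y⁺) = λ v`), one has the stated descent
inequality for the lower-level residual. -/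
theorem stmt_10 {d p : ℕ} (μ Lg ρl ρu lam : ℝ)
    (hμ : 0 < μ) (hlam : 0 < lam) (hρl : 0 < ρl) (hρu : 0 < ρu) (hρlu : 1 ≤ ρl * ρu)
    (g : EuclideanSpace ℝ (Fin d) → EuclideanSpace ℝ (Fin p) → ℝ)
    (gy : EuclideanSpace ℝ (Fin d) → EuclideanSpace ℝ (Fin p) → EuclideanSpace ℝ (Fin p))
    (hgy : ∀ x y, HasGradientAt (fun y' => g x y') (gy x y) y)
    (hlipy : ∀ x y₁ y₂, ‖gy x y₁ - gy x y₂‖ ≤ Lg * ‖y₁ - y₂‖)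
    (hlipx : ∀ x₁ x₂ y, ‖gy x₁ y - gy x₂ y‖ ≤ Lg * ‖x₁ - x₂‖)
    (G : EuclideanSpace ℝ (Fin d) → ℝ)
    (hGlow : ∀ x y, G x ≤ g x y) (hGatt : ∀ x, ∃ y, g x y = G x)
    (hPL : ∀ x y, ‖gy x y‖ ^ 2 ≥ 2 * μ * (g x y - G x))
    (B : EuclideanSpace ℝ (Fin p) →L[ℝ] EuclideanSpace ℝ (Fin p))
    (hBsymm : ∀ v w, ⟪B v, w⟫ = ⟪v, B w⟫)
    (hBl : ∀ v, ρl * ‖v‖ ^ 2 ≤ ⟪B v, v⟫) (hBu : ∀ v, ⟪B v, v⟫ ≤ ρu * ‖v‖ ^ 2)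
    (v y yp : EuclideanSpace ℝ (Fin p)) (x x' : EuclideanSpace ℝ (Fin d))
    (hupd : B (y - yp) = lam • v) :
    g x' yp - G x' ≤ (1 - lam * μ / ρu) * (g x' y - G x')
      - (1 / (2 * lam * ρu) - Lg / 2) * ‖yp - y‖ ^ 2
      + (lam * Lg ^ 2 / ρl) * ‖x' - x‖ ^ 2
      + (lam / ρl) * ‖gy x y - v‖ ^ 2 :=
  stmt_10_general μ Lg ρl ρu lam hlam hρl hρu hρlu g gy hgy hlipy hlipx G hPL B hBsymm hBl hBu v y
    yp x x' hupd
end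

section
/- Let g : ℝ^d × ℝ^p → ℝ be differentiable with ∇_x g L_g-Lipschitz in each variable (‖∇_x g(x, y₁) − ∇_x g(x, y₂)‖ ≤ L_g ‖y₁ − y₂‖ and ‖∇_x g(x₁, y) − ∇_x g(x₂, y)‖ ≤ L_g ‖x₁ − x₂‖). Suppose for every x the function g(x,·) attains its minimum G(x) at a point y*(x) and the quadratic growth condition g(x, y) − G(x) ≥ (μ/2) ‖y − y*(x)‖² holds for all y, with μ > 0; suppose G is differentiable with ∇G(x) = ∇_x g(x, y*(x)) and ∇G is L_G-Lipschitz with L_G ≥ L_g. Then for all x, x⁺ ∈ ℝ^d, y ∈ ℝ^p, γ > 0 and ρ_l > 0: g(x⁺, y) − G(x⁺) ≤ (1 + 4 L_g² γ/(μ ρ_l)) (g(x, y) − G(x)) + (ρ_l/(8γ) + L_G) ‖x⁺ − x‖². -/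
/-!
The residual `φ z = g z y - G z` has gradient `∇ₓg(z, y) - ∇ₓg(z, y*(z))`, which is
`(L_g + L_G)`-Lipschitz, so the descent lemma bounds `φ x⁺` by
`φ x + ⟪∇φ x, x⁺ - x⟫ + (L_g + L_G)/2 ‖x⁺ - x‖²`. Young's inequality with weight `ρ_l/(4γ)`
splits the inner product, and `‖∇φ x‖ ≤ L_g ‖y - y*(x)‖` together with quadratic growth gives
`μ ‖∇φ x‖² ≤ 2 L_g² φ x`.
-/

open scoped RealInnerProductSpace

section Descent

variable {E : Type*} [NormedAddCommGroup E] [InnerProductSpace ℝ E] [CompleteSpace E]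
  {f : E → ℝ} {f' : E → E} {L : ℝ}

theorem descent_lemma (hf : ∀ z, HasGradientAt f (f' z) z)
    (hlip : ∀ a b, ‖f' a - f' b‖ ≤ L * ‖a - b‖) (x y : E) :
    f y ≤ f x + ⟪f' x, y - x⟫ + L / 2 * ‖y - x‖ ^ 2 := by
  set Δ := y - x
  -- `ψ` is `f` along the segment minus its quadratic upper model.
  set ψ : ℝ → ℝ := fun t => f (x + t • Δ) - t * ⟪f' x, Δ⟫ - L / 2 * t ^ 2 * ‖Δ‖ ^ 2
  have hψ : ∀ t : ℝ, HasDerivAt ψ (⟪f' (x + t • Δ) - f' x, Δ⟫ - L * t * ‖Δ‖ ^ 2) t := by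
    intro t
    have hline : HasDerivAt (fun s : ℝ => x + s • Δ) Δ t := by
      simpa using ((hasDerivAt_id t).smul_const Δ).const_add x
    have hf_line : HasDerivAt (fun s : ℝ => f (x + s • Δ)) ⟪f' (x + t • Δ), Δ⟫ t := by
      have := (hasGradientAt_iff_hasFDerivAt.mp (hf (x + t • Δ))).comp_hasDerivAt t hline
      simp only [InnerProductSpace.toDual_apply_apply] at this
      exact this
    refine ((hf_line.sub ((hasDerivAt_id t).mul_const ⟪f' x, Δ⟫)).sub
      (((hasDerivAt_pow 2 t).const_mul (L / 2)).mul_const (‖Δ‖ ^ 2))).congr_deriv ?_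
    rw [inner_sub_left]
    push_cast
    ring
  have hψ_deriv_nonpos : ∀ t ∈ interior (Set.Icc (0 : ℝ) 1), deriv ψ t ≤ 0 := by
    intro t ht
    rw [interior_Icc] at ht
    rw [(hψ t).deriv, sub_nonpos]
    calc ⟪f' (x + t • Δ) - f' x, Δ⟫ ≤ ‖f' (x + t • Δ) - f' x‖ * ‖Δ‖ := real_inner_le_norm _ _
      _ ≤ L * ‖t • Δ‖ * ‖Δ‖ := by
        gcongr
        simpa using hlip (x + t • Δ) x
      _ = L * t * ‖Δ‖ ^ 2 := by rw [norm_smul, Real.norm_of_nonneg ht.1.le]; ring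
  have hψ_anti : AntitoneOn ψ (Set.Icc 0 1) :=
    antitoneOn_of_deriv_nonpos (convex_Icc 0 1) (fun t _ => (hψ t).continuousAt.continuousWithinAt)
      (fun t _ => (hψ t).differentiableAt.differentiableWithinAt) hψ_deriv_nonpos
  have hψ_le := hψ_anti (by simp) (by simp) zero_le_one
  simp only [ψ, Δ, one_smul, add_sub_cancel, one_mul, one_pow, mul_one, zero_smul, add_zero,
    zero_mul, sub_zero, ne_eq, OfNat.ofNat_ne_zero, not_false_eq_true, zero_pow, mul_zero,
    tsub_le_iff_right] at hψ_le
  linarith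

theorem descent_lemma_young (hf : ∀ z, HasGradientAt f (f' z) z)
    (hlip : ∀ a b, ‖f' a - f' b‖ ≤ L * ‖a - b‖) {ε : ℝ} (hε : 0 < ε) (x y : E) :
    f y ≤ f x + ‖f' x‖ ^ 2 / (2 * ε) + (ε + L) / 2 * ‖y - x‖ ^ 2 := by
  have hyoung := two_mul_le_add_mul_sq (a := ‖f' x‖) (b := ‖y - x‖) (inv_pos.mpr hε)
  rw [inv_inv] at hyoung
  have hinner := real_inner_le_norm (f' x) (y - x)
  have hdiv : ‖f' x‖ ^ 2 / (2 * ε) = ε⁻¹ * ‖f' x‖ ^ 2 / 2 := by field_simp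
  linarith [descent_lemma hf hlip x y]

end Descent

theorem stmt_11_general {d p : ℕ} (μ Lg LG : ℝ) (hμ : 0 < μ) (hLG : Lg ≤ LG)
    (g : EuclideanSpace ℝ (Fin d) → EuclideanSpace ℝ (Fin p) → ℝ)
    (gx : EuclideanSpace ℝ (Fin d) → EuclideanSpace ℝ (Fin p) → EuclideanSpace ℝ (Fin d))
    (hgx : ∀ x y, HasGradientAt (fun x' => g x' y) (gx x y) x)
    (hlipy : ∀ x y₁ y₂, ‖gx x y₁ - gx x y₂‖ ≤ Lg * ‖y₁ - y₂‖)
    (hlipx : ∀ x₁ x₂ y, ‖gx x₁ y - gx x₂ y‖ ≤ Lg * ‖x₁ - x₂‖)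
    (G : EuclideanSpace ℝ (Fin d) → ℝ)
    (ystar : EuclideanSpace ℝ (Fin d) → EuclideanSpace ℝ (Fin p))
    (hQG : ∀ x y, g x y - G x ≥ (μ / 2) * ‖y - ystar x‖ ^ 2)
    (hGgrad : ∀ x, HasGradientAt G (gx x (ystar x)) x)
    (hGlip : ∀ x₁ x₂, ‖gx x₁ (ystar x₁) - gx x₂ (ystar x₂)‖ ≤ LG * ‖x₁ - x₂‖) :
    ∀ (x xp : EuclideanSpace ℝ (Fin d)) (y : EuclideanSpace ℝ (Fin p)) (γ ρl : ℝ),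
      0 < γ → 0 < ρl →
      g xp y - G xp ≤ (1 + 4 * Lg ^ 2 * γ / (μ * ρl)) * (g x y - G x)
        + (ρl / (8 * γ) + LG) * ‖xp - x‖ ^ 2 := by
  intro x xp y γ ρl hγ hρl
  set φ' := fun z => gx z y - gx z (ystar z)
  have hφ : ∀ z, HasGradientAt (fun z => g z y - G z) (φ' z) z := fun z => by
    rw [hasGradientAt_iff_hasFDerivAt, map_sub]
    exact (hgx z y).hasFDerivAt.sub (hGgrad z).hasFDerivAt
  have hφ_lip : ∀ a b, ‖φ' a - φ' b‖ ≤ (Lg + LG) * ‖a - b‖ := fun a b => by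
    calc ‖φ' a - φ' b‖ = ‖(gx a y - gx b y) - (gx a (ystar a) - gx b (ystar b))‖ := by
          simp only [φ', sub_sub_sub_comm]
      _ ≤ Lg * ‖a - b‖ + LG * ‖a - b‖ :=
          (norm_sub_le _ _).trans (add_le_add (hlipx a b y) (hGlip a b))
      _ = (Lg + LG) * ‖a - b‖ := by ring
  have hφ'_sq : μ * ‖φ' x‖ ^ 2 ≤ 2 * Lg ^ 2 * (g x y - G x) :=
    calc μ * ‖φ' x‖ ^ 2 ≤ μ * (Lg * ‖y - ystar x‖) ^ 2 := by
          gcongr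
          exact hlipy x y (ystar x)
      _ = 2 * Lg ^ 2 * (μ / 2 * ‖y - ystar x‖ ^ 2) := by ring
      _ ≤ 2 * Lg ^ 2 * (g x y - G x) := by gcongr; exact hQG x y
  have hε : 0 < ρl / (4 * γ) := by positivity
  have hgrad_term :
      ‖φ' x‖ ^ 2 / (2 * (ρl / (4 * γ))) ≤ 4 * Lg ^ 2 * γ / (μ * ρl) * (g x y - G x) :=
    calc ‖φ' x‖ ^ 2 / (2 * (ρl / (4 * γ))) = 2 * γ / (μ * ρl) * (μ * ‖φ' x‖ ^ 2) := by
          field_simp; ring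
      _ ≤ 2 * γ / (μ * ρl) * (2 * Lg ^ 2 * (g x y - G x)) := by gcongr
      _ = 4 * Lg ^ 2 * γ / (μ * ρl) * (g x y - G x) := by ring
  have hquad :
      (ρl / (4 * γ) + (Lg + LG)) / 2 * ‖xp - x‖ ^ 2 ≤ (ρl / (8 * γ) + LG) * ‖xp - x‖ ^ 2 := by
    gcongr
    linarith [show ρl / (4 * γ) / 2 = ρl / (8 * γ) by ring]
  linarith [descent_lemma_young hφ hφ_lip hε x xp]

/-- Growth of the lower-level residual in the upper-level variable: with
`∇_x g` `L_g`-Lipschitz in each variable, `G(x) = min_y g(x,y)` attained at `y*(x)` with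
quadratic growth, `∇G(x) = ∇_x g(x,y*(x))` and `∇G` `L_G`-Lipschitz (`L_G ≥ L_g`), then
for all `x, x⁺, y, γ > 0, ρ_l > 0`,
`g(x⁺,y) − G(x⁺) ≤ (1 + 4L_g²γ/(μρ_l))(g(x,y) − G(x)) + (ρ_l/(8γ) + L_G)‖x⁺ − x‖²`. -/
theorem stmt_11 {d p : ℕ} (μ Lg LG : ℝ) (hμ : 0 < μ) (hLG : Lg ≤ LG)
    (g : EuclideanSpace ℝ (Fin d) → EuclideanSpace ℝ (Fin p) → ℝ)
    (gx : EuclideanSpace ℝ (Fin d) → EuclideanSpace ℝ (Fin p) → EuclideanSpace ℝ (Fin d))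
    (hgx : ∀ x y, HasGradientAt (fun x' => g x' y) (gx x y) x)
    (hlipy : ∀ x y₁ y₂, ‖gx x y₁ - gx x y₂‖ ≤ Lg * ‖y₁ - y₂‖)
    (hlipx : ∀ x₁ x₂ y, ‖gx x₁ y - gx x₂ y‖ ≤ Lg * ‖x₁ - x₂‖)
    (G : EuclideanSpace ℝ (Fin d) → ℝ)
    (ystar : EuclideanSpace ℝ (Fin d) → EuclideanSpace ℝ (Fin p))
    (hGval : ∀ x, g x (ystar x) = G x) (hGlow : ∀ x y, G x ≤ g x y)
    (hQG : ∀ x y, g x y - G x ≥ (μ / 2) * ‖y - ystar x‖ ^ 2)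
    (hGgrad : ∀ x, HasGradientAt G (gx x (ystar x)) x)
    (hGlip : ∀ x₁ x₂, ‖gx x₁ (ystar x₁) - gx x₂ (ystar x₂)‖ ≤ LG * ‖x₁ - x₂‖) :
    ∀ (x xp : EuclideanSpace ℝ (Fin d)) (y : EuclideanSpace ℝ (Fin p)) (γ ρl : ℝ),
      0 < γ → 0 < ρl →
      g xp y - G xp ≤ (1 + 4 * Lg ^ 2 * γ / (μ * ρl)) * (g x y - G x)
        + (ρl / (8 * γ) + LG) * ‖xp - x‖ ^ 2 :=
  stmt_11_general μ Lg LG hμ hLG g gx hgx hlipy hlipx G ystar hQG hGgrad hGlip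
end

section
/- Fix x ∈ ℝ^d and constants μ, L_g, L_f, L_gxy, L_gyy, C_fy, C_gxy > 0 with μ ≤ L_g. Let g_x : ℝ^p → ℝ attain its minimum G(x) at y*(x) and satisfy the quadratic growth condition g_x(y) − G(x) ≥ (μ/2) ‖y − y*(x)‖² for all y. Let u : ℝ^p → ℝ^d be L_f-Lipschitz; let h : ℝ^p → ℝ^p be L_f-Lipschitz with ‖h(y)‖ ≤ C_fy for all y; let Gm : ℝ^p → ℝ^{d×p} be L_gxy-Lipschitz (in spectral norm) with ‖Gm(y)‖ ≤ C_gxy for all y; let H : ℝ^p → ℝ^{p×p} be L_gyy-Lipschitz (in spectral norm) with H(y) symmetric with all eigenvalues in [μ, L_g] for every y. Define w(y) = u(y) − Gm(y) H(y)^{-1} h(y). Then for every y ∈ ℝ^p, ‖w(y) − w(y*(x))‖² ≤ L̂² ‖y − y*(x)‖² ≤ (2 L̂²/μ) (g_x(y) − G(x)), where L̂² = 4 ( L_f² + L_gxy² C_fy²/μ² + L_gyy² C_gxy² C_fy²/μ⁴ + L_f² C_gxy²/μ² ). -/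
open scoped RealInnerProductSpace

set_option maxHeartbeats 1000000 in
/-- (Lemma 3 of the paper.) Lipschitz-type bound for the projected
hypergradient estimator `w(y) = u(y) − Gm(y) H(y)⁻¹ h(y)`: if all ingredients are Lipschitz
and appropriately bounded, and the lower-level function `g_x` has quadratic growth around
its minimizer `y*(x)` with minimum value `G(x)`, then
`‖w(y) − w(y*(x))‖² ≤ L̂² ‖y − y*(x)‖² ≤ (2L̂²/μ)(g_x(y) − G(x))`, where
`L̂² = 4(L_f² + L_gxy² C_fy²/μ² + L_gyy² C_gxy² C_fy²/μ⁴ + L_f² C_gxy²/μ²)`. -/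
theorem stmt_14 {d p : ℕ} (μ Lg Lf Lgxy Lgyy Cfy Cgxy : ℝ)
    (hμ : 0 < μ) (hμLg : μ ≤ Lg) (hLf : 0 < Lf) (hLgxy : 0 < Lgxy) (hLgyy : 0 < Lgyy)
    (hCfy : 0 < Cfy) (hCgxy : 0 < Cgxy)
    (gx : EuclideanSpace ℝ (Fin p) → ℝ) (Gx : ℝ)
    (ystar : EuclideanSpace ℝ (Fin p))
    (hGval : gx ystar = Gx) (hGlow : ∀ y, Gx ≤ gx y)
    (hQG : ∀ y, gx y - Gx ≥ (μ / 2) * ‖y - ystar‖ ^ 2)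
    (u : EuclideanSpace ℝ (Fin p) → EuclideanSpace ℝ (Fin d))
    (hu : ∀ y₁ y₂, ‖u y₁ - u y₂‖ ≤ Lf * ‖y₁ - y₂‖)
    (h : EuclideanSpace ℝ (Fin p) → EuclideanSpace ℝ (Fin p))
    (hhlip : ∀ y₁ y₂, ‖h y₁ - h y₂‖ ≤ Lf * ‖y₁ - y₂‖)
    (hhb : ∀ y, ‖h y‖ ≤ Cfy)
    (Gm : EuclideanSpace ℝ (Fin p) → (EuclideanSpace ℝ (Fin p) →L[ℝ] EuclideanSpace ℝ (Fin d)))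
    (hGmlip : ∀ y₁ y₂, ‖Gm y₁ - Gm y₂‖ ≤ Lgxy * ‖y₁ - y₂‖)
    (hGmb : ∀ y, ‖Gm y‖ ≤ Cgxy)
    (H : EuclideanSpace ℝ (Fin p) → (EuclideanSpace ℝ (Fin p) →L[ℝ] EuclideanSpace ℝ (Fin p)))
    (hHlip : ∀ y₁ y₂, ‖H y₁ - H y₂‖ ≤ Lgyy * ‖y₁ - y₂‖)
    (hHsymm : ∀ y v w, ⟪H y v, w⟫ = ⟪v, H y w⟫)
    (hHl : ∀ y v, μ * ‖v‖ ^ 2 ≤ ⟪H y v, v⟫) (hHu : ∀ y v, ⟪H y v, v⟫ ≤ Lg * ‖v‖ ^ 2)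
    (Hinv : EuclideanSpace ℝ (Fin p) → (EuclideanSpace ℝ (Fin p) →L[ℝ] EuclideanSpace ℝ (Fin p)))
    (hHinv1 : ∀ y, (H y).comp (Hinv y) = ContinuousLinearMap.id ℝ _)
    (hHinv2 : ∀ y, (Hinv y).comp (H y) = ContinuousLinearMap.id ℝ _) :
    ∀ y, ‖(u y - Gm y (Hinv y (h y))) - (u ystar - Gm ystar (Hinv ystar (h ystar)))‖ ^ 2
        ≤ 4 * (Lf ^ 2 + Lgxy ^ 2 * Cfy ^ 2 / μ ^ 2 + Lgyy ^ 2 * Cgxy ^ 2 * Cfy ^ 2 / μ ^ 4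
            + Lf ^ 2 * Cgxy ^ 2 / μ ^ 2) * ‖y - ystar‖ ^ 2 ∧
      4 * (Lf ^ 2 + Lgxy ^ 2 * Cfy ^ 2 / μ ^ 2 + Lgyy ^ 2 * Cgxy ^ 2 * Cfy ^ 2 / μ ^ 4
          + Lf ^ 2 * Cgxy ^ 2 / μ ^ 2) * ‖y - ystar‖ ^ 2
        ≤ (2 * (4 * (Lf ^ 2 + Lgxy ^ 2 * Cfy ^ 2 / μ ^ 2
            + Lgyy ^ 2 * Cgxy ^ 2 * Cfy ^ 2 / μ ^ 4 + Lf ^ 2 * Cgxy ^ 2 / μ ^ 2)) / μ)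
            * (gx y - Gx) := by

  intro y
  have hr0 : (0:ℝ) ≤ ‖y - ystar‖ := norm_nonneg _
  -- operator norm bound on Hinv
  have hinvb : ∀ z w, ‖Hinv z w‖ ≤ μ⁻¹ * ‖w‖ := by
    intro z w
    have hid : H z (Hinv z w) = w := by
      have := congrArg (fun T => T w) (hHinv1 z)
      simpa using this
    have h1 := hHl z (Hinv z w)
    rw [hid] at h1
    have h2 : ⟪w, Hinv z w⟫ ≤ ‖w‖ * ‖Hinv z w‖ := real_inner_le_norm _ _
    have h3 : μ * ‖Hinv z w‖ ^ 2 ≤ ‖w‖ * ‖Hinv z w‖ := le_trans h1 h2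
    rcases eq_or_lt_of_le (norm_nonneg (Hinv z w)) with h0 | h0
    · rw [← h0]; positivity
    · have h4 : μ * ‖Hinv z w‖ ≤ ‖w‖ := by nlinarith
      calc ‖Hinv z w‖ = μ⁻¹ * (μ * ‖Hinv z w‖) := by field_simp
        _ ≤ μ⁻¹ * ‖w‖ := mul_le_mul_of_nonneg_left h4 (by positivity)
  -- resolvent identity pointwise
  have hinvdiff : ∀ z, Hinv y z - Hinv ystar z
      = Hinv y ((H ystar - H y) (Hinv ystar z)) := by
    intro z
    have e1 : H ystar (Hinv ystar z) = z := by
      have := congrArg (fun T => T z) (hHinv1 ystar); simpa using this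
    have e2 : Hinv y (H y (Hinv ystar z)) = Hinv ystar z := by
      have := congrArg (fun T => T (Hinv ystar z)) (hHinv2 y); simpa using this
    rw [ContinuousLinearMap.sub_apply, map_sub, e1, e2]
  -- decomposition
  have hE : (u y - Gm y (Hinv y (h y))) - (u ystar - Gm ystar (Hinv ystar (h ystar)))
      = (u y - u ystar) - ((Gm y - Gm ystar) (Hinv y (h y))
        + Gm ystar (Hinv y (h y) - Hinv ystar (h y))
        + Gm ystar (Hinv ystar (h y) - Hinv ystar (h ystar))) := by
    simp only [ContinuousLinearMap.sub_apply, map_sub]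
    abel
  have na : ‖u y - u ystar‖ ≤ Lf * ‖y - ystar‖ := hu y ystar
  have nb : ‖(Gm y - Gm ystar) (Hinv y (h y))‖
      ≤ (Lgxy * ‖y - ystar‖) * (μ⁻¹ * Cfy) := by
    calc ‖(Gm y - Gm ystar) (Hinv y (h y))‖
        ≤ ‖Gm y - Gm ystar‖ * ‖Hinv y (h y)‖ := ContinuousLinearMap.le_opNorm _ _
      _ ≤ (Lgxy * ‖y - ystar‖) * (μ⁻¹ * Cfy) := by
          apply mul_le_mul (hGmlip y ystar) _ (norm_nonneg _) (by positivity)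
          calc ‖Hinv y (h y)‖ ≤ μ⁻¹ * ‖h y‖ := hinvb y (h y)
            _ ≤ μ⁻¹ * Cfy := mul_le_mul_of_nonneg_left (hhb y) (by positivity)
  have nc : ‖Gm ystar (Hinv y (h y) - Hinv ystar (h y))‖
      ≤ Cgxy * (μ⁻¹ * ((Lgyy * ‖y - ystar‖) * (μ⁻¹ * Cfy))) := by
    calc ‖Gm ystar (Hinv y (h y) - Hinv ystar (h y))‖
        ≤ ‖Gm ystar‖ * ‖Hinv y (h y) - Hinv ystar (h y)‖ := ContinuousLinearMap.le_opNorm _ _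
      _ ≤ Cgxy * (μ⁻¹ * ((Lgyy * ‖y - ystar‖) * (μ⁻¹ * Cfy))) := by
          apply mul_le_mul (hGmb ystar) _ (norm_nonneg _) hCgxy.le
          rw [hinvdiff (h y)]
          calc ‖Hinv y ((H ystar - H y) (Hinv ystar (h y)))‖
              ≤ μ⁻¹ * ‖(H ystar - H y) (Hinv ystar (h y))‖ := hinvb _ _
            _ ≤ μ⁻¹ * ((Lgyy * ‖y - ystar‖) * (μ⁻¹ * Cfy)) := by
                apply mul_le_mul_of_nonneg_left _ (by positivity)
                calc ‖(H ystar - H y) (Hinv ystar (h y))‖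
                    ≤ ‖H ystar - H y‖ * ‖Hinv ystar (h y)‖ :=
                      ContinuousLinearMap.le_opNorm _ _
                  _ ≤ (Lgyy * ‖y - ystar‖) * (μ⁻¹ * Cfy) := by
                      apply mul_le_mul _ _ (norm_nonneg _) (by positivity)
                      · have := hHlip ystar y
                        rwa [norm_sub_rev y ystar]
                      · calc ‖Hinv ystar (h y)‖ ≤ μ⁻¹ * ‖h y‖ := hinvb _ _
                          _ ≤ μ⁻¹ * Cfy :=
                            mul_le_mul_of_nonneg_left (hhb y) (by positivity)
  have nd : ‖Gm ystar (Hinv ystar (h y - h ystar))‖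
      ≤ Cgxy * (μ⁻¹ * (Lf * ‖y - ystar‖)) := by
    calc ‖Gm ystar (Hinv ystar (h y - h ystar))‖
        ≤ ‖Gm ystar‖ * ‖Hinv ystar (h y - h ystar)‖ := ContinuousLinearMap.le_opNorm _ _
      _ ≤ Cgxy * (μ⁻¹ * (Lf * ‖y - ystar‖)) := by
          apply mul_le_mul (hGmb ystar) _ (norm_nonneg _) hCgxy.le
          calc ‖Hinv ystar (h y - h ystar)‖ ≤ μ⁻¹ * ‖h y - h ystar‖ := hinvb _ _
            _ ≤ μ⁻¹ * (Lf * ‖y - ystar‖) :=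
              mul_le_mul_of_nonneg_left (hhlip y ystar) (by positivity)
  have hmd : Hinv ystar (h y) - Hinv ystar (h ystar) = Hinv ystar (h y - h ystar) := by
    rw [map_sub]
  have hEn : ‖(u y - Gm y (Hinv y (h y))) - (u ystar - Gm ystar (Hinv ystar (h ystar)))‖
      ≤ (Lf + Lgxy * Cfy / μ + Lgyy * Cgxy * Cfy / μ ^ 2 + Lf * Cgxy / μ) * ‖y - ystar‖ := by
    rw [hE]
    calc ‖(u y - u ystar) - ((Gm y - Gm ystar) (Hinv y (h y))
          + Gm ystar (Hinv y (h y) - Hinv ystar (h y))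
          + Gm ystar (Hinv ystar (h y) - Hinv ystar (h ystar)))‖
        ≤ ‖u y - u ystar‖ + (‖(Gm y - Gm ystar) (Hinv y (h y))‖
          + ‖Gm ystar (Hinv y (h y) - Hinv ystar (h y))‖
          + ‖Gm ystar (Hinv ystar (h y) - Hinv ystar (h ystar))‖) := by
          refine le_trans (norm_sub_le _ _) ?_
          gcongr
          refine le_trans (norm_add_le _ _) ?_
          gcongr
          exact norm_add_le _ _
      _ ≤ Lf * ‖y - ystar‖ + ((Lgxy * ‖y - ystar‖) * (μ⁻¹ * Cfy)
          + Cgxy * (μ⁻¹ * ((Lgyy * ‖y - ystar‖) * (μ⁻¹ * Cfy)))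
          + Cgxy * (μ⁻¹ * (Lf * ‖y - ystar‖))) := by
          rw [hmd]
          gcongr <;> first | exact na | exact nb | exact nc | exact nd
      _ = (Lf + Lgxy * Cfy / μ + Lgyy * Cgxy * Cfy / μ ^ 2 + Lf * Cgxy / μ) * ‖y - ystar‖ := by
          field_simp
          ring
  set c1 := Lf with hc1
  set c2 := Lgxy * Cfy / μ with hc2
  set c3 := Lgyy * Cgxy * Cfy / μ ^ 2 with hc3
  set c4 := Lf * Cgxy / μ with hc4
  have hsum : (c1 + c2 + c3 + c4) ^ 2 ≤ 4 * (c1 ^ 2 + c2 ^ 2 + c3 ^ 2 + c4 ^ 2) := by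
    nlinarith [sq_nonneg (c1 - c2), sq_nonneg (c1 - c3), sq_nonneg (c1 - c4),
      sq_nonneg (c2 - c3), sq_nonneg (c2 - c4), sq_nonneg (c3 - c4)]
  have hL2 : 4 * (Lf ^ 2 + Lgxy ^ 2 * Cfy ^ 2 / μ ^ 2 + Lgyy ^ 2 * Cgxy ^ 2 * Cfy ^ 2 / μ ^ 4
      + Lf ^ 2 * Cgxy ^ 2 / μ ^ 2) = 4 * (c1 ^ 2 + c2 ^ 2 + c3 ^ 2 + c4 ^ 2) := by
    rw [hc1, hc2, hc3, hc4]
    field_simp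
  constructor
  · rw [hL2]
    calc ‖(u y - Gm y (Hinv y (h y))) - (u ystar - Gm ystar (Hinv ystar (h ystar)))‖ ^ 2
        ≤ ((c1 + c2 + c3 + c4) * ‖y - ystar‖) ^ 2 := by
          apply pow_le_pow_left₀ (norm_nonneg _) hEn
      _ = (c1 + c2 + c3 + c4) ^ 2 * ‖y - ystar‖ ^ 2 := by ring
      _ ≤ 4 * (c1 ^ 2 + c2 ^ 2 + c3 ^ 2 + c4 ^ 2) * ‖y - ystar‖ ^ 2 := by
          apply mul_le_mul_of_nonneg_right hsum (by positivity)
  · set K := 4 * (Lf ^ 2 + Lgxy ^ 2 * Cfy ^ 2 / μ ^ 2 + Lgyy ^ 2 * Cgxy ^ 2 * Cfy ^ 2 / μ ^ 4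
      + Lf ^ 2 * Cgxy ^ 2 / μ ^ 2) with hK
    have hK0 : 0 ≤ K := by rw [hK]; positivity
    have h5 : (μ / 2) * ‖y - ystar‖ ^ 2 ≤ gx y - Gx := hQG y
    calc K * ‖y - ystar‖ ^ 2 = (2 * K / μ) * ((μ / 2) * ‖y - ystar‖ ^ 2) := by
          field_simp
      _ ≤ (2 * K / μ) * (gx y - Gx) :=
          mul_le_mul_of_nonneg_left h5 (by positivity)
end

section
/- Let (Ω, ℱ, P) be a probability space and 𝒜 ⊆ ℱ a sub-σ-algebra. Let x, x' be ℝ^d-valued, y, y' be ℝ^p-valued, and a be ℝ^m-valued square-integrable random vectors, all 𝒜-measurable. Let Z be a measurable space, let ζ¹, …, ζᵇ be i.i.d. Z-valued random elements independent of 𝒜, and let Φ : ℝ^d × ℝ^p × Z → ℝ^m be measurable such that ‖Φ(u₁, v₁, z) − Φ(u₂, v₂, z)‖² ≤ 2L² (‖u₁ − u₂‖² + ‖v₁ − v₂‖²) for all u₁, u₂, v₁, v₂ and all z, and such that Φ̄(u, v) = E[Φ(u, v, ζ¹)] exists for all (u, v). Define a' = a + (1/b) Σ_{i=1}^{b} (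 Φ(x', y', ζⁱ) − Φ(x, y, ζⁱ) ). Then E‖a' − Φ̄(x', y')‖² ≤ E‖a − Φ̄(x, y)‖² + (2L²/b) E[ ‖x' − x‖² + ‖y' − y‖² ]. -/
/-!
Let `ν` be the common law of the samples, `ξ(z) = Φ(x', y', z) - Φ(x, y, z)` and
`ηᵢ = ξ(ζⁱ) - ∫ ξ dν`, so that `a' - Φ̄(x', y') = (a - Φ̄(x, y)) + b⁻¹ ∑ᵢ ηᵢ`. Since `ζⁱ` is
independent of `𝒜 ⊔ σ(ζʲ)` for `j ≠ i`, integrating `ζⁱ` out first (Fubini against the product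
law) shows that `ηᵢ` is `L²`-orthogonal to `a - Φ̄(x, y)` and to `ηⱼ`. Pythagoras then gives
`E‖a' - Φ̄(x', y')‖² = E‖a - Φ̄(x, y)‖² + b⁻² ∑ᵢ E‖ηᵢ‖²`, and
`E‖ηᵢ‖² ≤ E‖ξ(ζⁱ)‖² ≤ 2L² E[‖x' - x‖² + ‖y' - y‖²]`: a variance is at most a second moment.
-/

open scoped RealInnerProductSpace
open MeasureTheory ProbabilityTheory

namespace MeasureTheory

variable {Ω E : Type*} {mΩ : MeasurableSpace Ω} {μ : Measure Ω} [NormedAddCommGroup E]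

theorem memLp_two_of_norm_sq_le {f : Ω → E} {B : Ω → ℝ} (hf : AEStronglyMeasurable f μ)
    (hB : Integrable B μ) (hfB : ∀ ω, ‖f ω‖ ^ 2 ≤ B ω) : MemLp f 2 μ :=
  (memLp_two_iff_integrable_sq_norm hf).2 <| hB.mono' (hf.norm.pow 2) <|
    ae_of_all _ fun ω => by simpa using hfB ω

theorem memLp_two_comp₂_of_norm_sub_sq_le {E₁ E₂ : Type*} [NormedAddCommGroup E₁]
    [NormedAddCommGroup E₂] [IsFiniteMeasure μ] {F : E₁ → E₂ → E} {K : ℝ}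
    (hF : ∀ u v, ‖F u v - F 0 0‖ ^ 2 ≤ K * (‖u‖ ^ 2 + ‖v‖ ^ 2)) {x : Ω → E₁} {y : Ω → E₂}
    (hx : MemLp x 2 μ) (hy : MemLp y 2 μ)
    (hFxy : AEStronglyMeasurable (fun ω => F (x ω) (y ω)) μ) :
    MemLp (fun ω => F (x ω) (y ω)) 2 μ := by
  have hK : Integrable (fun ω => K * (‖x ω‖ ^ 2 + ‖y ω‖ ^ 2)) μ :=
    ((hx.integrable_norm_pow two_ne_zero).add (hy.integrable_norm_pow two_ne_zero)).const_mul K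
  simpa using (memLp_two_of_norm_sq_le (hFxy.sub aestronglyMeasurable_const) hK
    fun ω => hF _ _).add (memLp_const (F 0 0))

variable [InnerProductSpace ℝ E]

theorem MemLp.integrable_inner {f g : Ω → E} (hf : MemLp f 2 μ) (hg : MemLp g 2 μ) :
    Integrable (fun ω => ⟪f ω, g ω⟫) μ :=
  (L2.integrable_inner (𝕜 := ℝ) (hf.toLp f) (hg.toLp g)).congr <| by
    filter_upwards [hf.coeFn_toLp, hg.coeFn_toLp] with ω hfω hgω
    rw [hfω, hgω]

theorem integral_norm_add_sq_of_integral_inner_eq_zero {f g : Ω → E} (hf : MemLp f 2 μ)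
    (hg : MemLp g 2 μ) (horth : ∫ ω, ⟪f ω, g ω⟫ ∂μ = 0) :
    ∫ ω, ‖f ω + g ω‖ ^ 2 ∂μ = ∫ ω, ‖f ω‖ ^ 2 ∂μ + ∫ ω, ‖g ω‖ ^ 2 ∂μ := by
  have hf2 := hf.integrable_norm_pow two_ne_zero
  have hg2 := hg.integrable_norm_pow two_ne_zero
  have hfg : Integrable (fun ω => 2 * ⟪f ω, g ω⟫) μ := (hf.integrable_inner hg).const_mul 2
  simp_rw [norm_add_sq_real]
  rw [integral_add (f := fun ω => ‖f ω‖ ^ 2 + 2 * ⟪f ω, g ω⟫) (hf2.add hfg) hg2,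
    integral_add hf2 hfg, integral_const_mul, horth]
  ring

theorem integral_norm_sum_sq_of_pairwise_integral_inner_eq_zero {ι : Type*} [Fintype ι]
    {f : ι → Ω → E} (hf : ∀ i, MemLp (f i) 2 μ)
    (horth : Pairwise fun i j => ∫ ω, ⟪f i ω, f j ω⟫ ∂μ = 0) :
    ∫ ω, ‖∑ i, f i ω‖ ^ 2 ∂μ = ∑ i, ∫ ω, ‖f i ω‖ ^ 2 ∂μ := by
  have hint : ∀ i j, Integrable (fun ω => ⟪f i ω, f j ω⟫) μ :=
    fun i j => (hf i).integrable_inner (hf j)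
  calc ∫ ω, ‖∑ i, f i ω‖ ^ 2 ∂μ = ∫ ω, ∑ i, ∑ j, ⟪f i ω, f j ω⟫ ∂μ := by
        simp_rw [← real_inner_self_eq_norm_sq, sum_inner, inner_sum]
    _ = ∑ i, ∑ j, ∫ ω, ⟪f i ω, f j ω⟫ ∂μ := by
        rw [integral_finsetSum _ fun i _ => integrable_finsetSum _ fun j _ => hint i j]
        exact Finset.sum_congr rfl fun i _ => integral_finsetSum _ fun j _ => hint i j
    _ = ∑ i, ∫ ω, ‖f i ω‖ ^ 2 ∂μ := by
        refine Finset.sum_congr rfl fun i _ => ?_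
        rw [Fintype.sum_eq_single i fun j hji => horth hji.symm]
        simp_rw [real_inner_self_eq_norm_sq]

theorem integral_norm_add_smul_sum_sq {ι : Type*} [Fintype ι] {Y : Ω → E} {η : ι → Ω → E}
    (hY : MemLp Y 2 μ) (hη : ∀ i, MemLp (η i) 2 μ) (hYη : ∀ i, ∫ ω, ⟪Y ω, η i ω⟫ ∂μ = 0)
    (hηη : Pairwise fun i j => ∫ ω, ⟪η i ω, η j ω⟫ ∂μ = 0) (c : ℝ) :
    ∫ ω, ‖Y ω + c • ∑ i, η i ω‖ ^ 2 ∂μ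
      = ∫ ω, ‖Y ω‖ ^ 2 ∂μ + c ^ 2 * ∑ i, ∫ ω, ‖η i ω‖ ^ 2 ∂μ := by
  set f : Option ι → Ω → E := fun o ω => o.elim (Y ω) fun i => c • η i ω
  have hf : ∀ o, MemLp (f o) 2 μ := by
    rintro (_ | i)
    exacts [hY, (hη i).const_smul c]
  have horth : Pairwise fun o o' => ∫ ω, ⟪f o ω, f o' ω⟫ ∂μ = 0 := by
    rintro (_ | i) (_ | j) hne
    · exact absurd rfl hne
    · simp [f, inner_smul_right, integral_const_mul, hYη]
    · simp [f, inner_smul_left, real_inner_comm, integral_const_mul, hYη]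
    · simp [f, inner_smul_left, inner_smul_right, integral_const_mul,
        hηη fun h => hne (congrArg some h)]
  have hsum : ∀ ω, Y ω + c • ∑ i, η i ω = ∑ o, f o ω := fun ω => by
    simp [Fintype.sum_option, f, Finset.smul_sum]
  simp_rw [hsum, integral_norm_sum_sq_of_pairwise_integral_inner_eq_zero hf horth]
  simp [Fintype.sum_option, f, norm_smul, mul_pow, integral_const_mul, Finset.mul_sum]

end MeasureTheory

theorem norm_integral_sq_le_of_forall_norm_sq_le {Z E : Type*} [MeasurableSpace Z]
    [NormedAddCommGroup E] [NormedSpace ℝ E] {ν : Measure Z} [IsProbabilityMeasure ν]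
    {f : Z → E} {C : ℝ} (hfC : ∀ z, ‖f z‖ ^ 2 ≤ C) : ‖∫ z, f z ∂ν‖ ^ 2 ≤ C := by
  obtain ⟨z₀⟩ := nonempty_of_isProbabilityMeasure ν
  have hC : 0 ≤ C := (sq_nonneg _).trans (hfC z₀)
  have hbound : ‖∫ z, f z ∂ν‖ ≤ √C := by
    simpa using norm_integral_le_of_norm_le_const (μ := ν)
      (ae_of_all _ fun z => Real.le_sqrt_of_sq_le (hfC z))
  calc ‖∫ z, f z ∂ν‖ ^ 2 ≤ √C ^ 2 := by gcongr
    _ = C := Real.sq_sqrt hC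

theorem ProbabilityTheory.indep_sup_comap_of_iIndep_option {Ω Z ι : Type*}
    {𝒢 mΩ : MeasurableSpace Ω} {μ : Measure Ω} [MeasurableSpace Z] {ζ : ι → Ω → Z} (h𝒢 : 𝒢 ≤ mΩ)
    (hζ : ∀ i, Measurable (ζ i))
    (hindep : iIndep (fun j : Option ι =>
      j.elim 𝒢 fun i => MeasurableSpace.comap (ζ i) inferInstance) μ)
    {i j : ι} (hij : i ≠ j) :
    Indep (𝒢 ⊔ MeasurableSpace.comap (ζ i) inferInstance)
      (MeasurableSpace.comap (ζ j) inferInstance) μ := by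
  have hle : ∀ k : Option ι,
      k.elim 𝒢 (fun i => MeasurableSpace.comap (ζ i) inferInstance) ≤ mΩ := by
    rintro (_ | k)
    exacts [h𝒢, (hζ k).comap_le]
  have := indep_iSup_of_disjoint hle hindep (S := {none, some i}) (T := {some j})
    (by simpa using hij.symm)
  rwa [iSup_insert, iSup_singleton, iSup_singleton] at this

section SquareIntegrable

variable {Ω E S Z : Type*} {mΩ : MeasurableSpace Ω} {μ : Measure Ω} [NormedAddCommGroup E]
  [MeasurableSpace E] [BorelSpace E] [SecondCountableTopology E] [MeasurableSpace S]
  [MeasurableSpace Z] {ν : Measure Z} [IsProbabilityMeasure ν] {ζ : Ω → Z} {V : Ω → S}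
  {ξ : S → Z → E}

theorem memLp_two_comp_of_norm_sq_le (hV : Measurable V) (hζ : Measurable ζ)
    (hξ : Measurable (Function.uncurry ξ)) {B : S → ℝ} (hB : Integrable (fun ω => B (V ω)) μ)
    (hξB : ∀ s z, ‖ξ s z‖ ^ 2 ≤ B s) : MemLp (fun ω => ξ (V ω) (ζ ω)) 2 μ :=
  memLp_two_of_norm_sq_le (hξ.comp (hV.prodMk hζ)).aestronglyMeasurable hB fun _ => hξB _ _

theorem integrable_of_forall_norm_sq_le (hξ : Measurable (Function.uncurry ξ)) {B : S → ℝ}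
    (hξB : ∀ s z, ‖ξ s z‖ ^ 2 ≤ B s) (s : S) : Integrable (ξ s) ν :=
  (memLp_two_of_norm_sq_le hξ.of_uncurry_left.aestronglyMeasurable (integrable_const (B s))
    (hξB s)).integrable one_le_two

variable [NormedSpace ℝ E]

theorem memLp_two_integral_comp_of_norm_sq_le (hV : Measurable V)
    (hξ : Measurable (Function.uncurry ξ)) {B : S → ℝ} (hB : Integrable (fun ω => B (V ω)) μ)
    (hξB : ∀ s z, ‖ξ s z‖ ^ 2 ≤ B s) : MemLp (fun ω => ∫ z, ξ (V ω) z ∂ν) 2 μ :=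
  memLp_two_of_norm_sq_le
    (hξ.stronglyMeasurable.integral_prod_right.measurable.comp hV).aestronglyMeasurable hB
    fun _ => norm_integral_sq_le_of_forall_norm_sq_le (hξB _)

end SquareIntegrable

section Orthogonality

variable {Ω E S Z : Type*} {𝒢 mΩ : MeasurableSpace Ω} {μ : Measure Ω} [IsProbabilityMeasure μ]
  [NormedAddCommGroup E] [InnerProductSpace ℝ E] [CompleteSpace E] [MeasurableSpace E]
  [BorelSpace E] [SecondCountableTopology E] [MeasurableSpace S] [MeasurableSpace Z]
  {ν : Measure Z} [IsProbabilityMeasure ν] {ζ : Ω → Z} {V : Ω → S} {ξ : S → Z → E}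

theorem integral_inner_eq_zero_of_indep (h𝒢 : 𝒢 ≤ mΩ) (hζ : Measurable ζ)
    (hind : Indep 𝒢 (MeasurableSpace.comap ζ inferInstance) μ) {Y : Ω → E}
    (hY : Measurable[𝒢] Y) (hV : Measurable[𝒢] V) (hξ : Measurable (Function.uncurry ξ))
    (hint : ∀ s, Integrable (ξ s) (μ.map ζ)) (hmean : ∀ s, ∫ z, ξ s z ∂(μ.map ζ) = 0)
    (hYξ : Integrable (fun ω => ⟪Y ω, ξ (V ω) (ζ ω)⟫) μ) :
    ∫ ω, ⟪Y ω, ξ (V ω) (ζ ω)⟫ ∂μ = 0 := by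
  set P : Ω → E × S := fun ω => (Y ω, V ω)
  have hP𝒢 : Measurable[𝒢] P := hY.prodMk hV
  have hP : Measurable P := hP𝒢.mono h𝒢 le_rfl
  have hPζ : AEMeasurable (fun ω => (P ω, ζ ω)) μ := (hP.prodMk hζ).aemeasurable
  have hlaw : μ.map (fun ω => (P ω, ζ ω)) = (μ.map P).prod (μ.map ζ) :=
    (indepFun_iff_map_prod_eq_prod_map_map hP.aemeasurable hζ.aemeasurable).1 <|
      (IndepFun_iff_Indep _ _ _).2 (indep_of_indep_of_le_left hind (measurable_iff_comap_le.1 hP𝒢))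
  set F : (E × S) × Z → ℝ := fun q => ⟪q.1.1, ξ q.1.2 q.2⟫
  have hF : Measurable F :=
    (measurable_fst.comp measurable_fst).inner
      (hξ.comp ((measurable_snd.comp measurable_fst).prodMk measurable_snd))
  have hFint : Integrable F ((μ.map P).prod (μ.map ζ)) := by
    rw [← hlaw]
    exact (integrable_map_measure hF.aestronglyMeasurable hPζ).2 hYξ
  calc ∫ ω, ⟪Y ω, ξ (V ω) (ζ ω)⟫ ∂μ = ∫ q, F q ∂(μ.map fun ω => (P ω, ζ ω)) :=
        (integral_map hPζ hF.aestronglyMeasurable).symm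
    _ = ∫ p, ∫ z, ⟪p.1, ξ p.2 z⟫ ∂(μ.map ζ) ∂(μ.map P) := by rw [hlaw, integral_prod _ hFint]
    _ = 0 := by simp [integral_inner (hint _), hmean]

theorem integral_inner_sub_integral_eq_zero (h𝒢 : 𝒢 ≤ mΩ) (hζ : Measurable ζ)
    (hind : Indep 𝒢 (MeasurableSpace.comap ζ inferInstance) μ) (hlaw : μ.map ζ = ν)
    (hV : Measurable[𝒢] V) (hξ : Measurable (Function.uncurry ξ))
    (hξint : ∀ s, Integrable (ξ s) ν) {Y : Ω → E} (hY : Measurable[𝒢] Y) (hY2 : MemLp Y 2 μ)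
    (hη2 : MemLp (fun ω => ξ (V ω) (ζ ω) - ∫ z, ξ (V ω) z ∂ν) 2 μ) :
    ∫ ω, ⟪Y ω, ξ (V ω) (ζ ω) - ∫ z, ξ (V ω) z ∂ν⟫ ∂μ = 0 := by
  subst hlaw
  refine integral_inner_eq_zero_of_indep h𝒢 hζ hind hY hV
    (ξ := fun s z => ξ s z - ∫ z', ξ s z' ∂(μ.map ζ)) ?_
    (fun s => (hξint s).sub (integrable_const _)) (fun s => ?_) (hY2.integrable_inner hη2)
  · exact hξ.sub (hξ.stronglyMeasurable.integral_prod_right.measurable.comp measurable_fst)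
  · rw [integral_sub (hξint s) (integrable_const _), integral_const, probReal_univ, one_smul,
      sub_self]

theorem integral_norm_sub_integral_sq_le (h𝒢 : 𝒢 ≤ mΩ) (hζ : Measurable ζ)
    (hind : Indep 𝒢 (MeasurableSpace.comap ζ inferInstance) μ) (hlaw : μ.map ζ = ν)
    (hV : Measurable[𝒢] V) (hξ : Measurable (Function.uncurry ξ)) {B : S → ℝ}
    (hB : Integrable (fun ω => B (V ω)) μ) (hξB : ∀ s z, ‖ξ s z‖ ^ 2 ≤ B s) :
    ∫ ω, ‖ξ (V ω) (ζ ω) - ∫ z, ξ (V ω) z ∂ν‖ ^ 2 ∂μ ≤ ∫ ω, B (V ω) ∂μ := by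
  have hVm : Measurable V := hV.mono h𝒢 le_rfl
  have hξ2 := memLp_two_comp_of_norm_sq_le hVm hζ hξ hB hξB
  have hmean2 := memLp_two_integral_comp_of_norm_sq_le (ν := ν) hVm hξ hB hξB
  have hmean : Measurable[𝒢] fun ω => ∫ z, ξ (V ω) z ∂ν :=
    hξ.stronglyMeasurable.integral_prod_right.measurable.comp hV
  have horth : ∫ ω, ⟪ξ (V ω) (ζ ω) - ∫ z, ξ (V ω) z ∂ν, ∫ z, ξ (V ω) z ∂ν⟫ ∂μ = 0 := by
    simpa only [real_inner_comm] using integral_inner_sub_integral_eq_zero h𝒢 hζ hind hlaw hV hξ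
      (integrable_of_forall_norm_sq_le hξ hξB) hmean hmean2 (hξ2.sub hmean2)
  have hpyth := integral_norm_add_sq_of_integral_inner_eq_zero (hξ2.sub hmean2) hmean2 horth
  simp only [Pi.sub_apply, sub_add_cancel] at hpyth
  calc ∫ ω, ‖ξ (V ω) (ζ ω) - ∫ z, ξ (V ω) z ∂ν‖ ^ 2 ∂μ
      ≤ ∫ ω, ‖ξ (V ω) (ζ ω)‖ ^ 2 ∂μ := by
        rw [hpyth]
        exact le_add_of_nonneg_right (integral_nonneg fun ω => by positivity)
    _ ≤ ∫ ω, B (V ω) ∂μ :=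
        integral_mono (hξ2.integrable_norm_pow two_ne_zero) hB fun ω => hξB _ _

theorem integral_norm_add_minibatch_sq_le {b : ℕ} {ζ : Fin b → Ω → Z} (h𝒢 : 𝒢 ≤ mΩ)
    (hζ : ∀ i, Measurable (ζ i))
    (hindep : iIndep (fun j : Option (Fin b) =>
      j.elim 𝒢 fun i => MeasurableSpace.comap (ζ i) inferInstance) μ)
    (hlaw : ∀ i, μ.map (ζ i) = ν) {Y : Ω → E} (hY : Measurable[𝒢] Y) (hY2 : MemLp Y 2 μ)
    (hV : Measurable[𝒢] V) (hξ : Measurable (Function.uncurry ξ)) {B : S → ℝ}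
    (hB : Integrable (fun ω => B (V ω)) μ) (hξB : ∀ s z, ‖ξ s z‖ ^ 2 ≤ B s) :
    ∫ ω, ‖Y ω + (b : ℝ)⁻¹ • ∑ i, (ξ (V ω) (ζ i ω) - ∫ z, ξ (V ω) z ∂ν)‖ ^ 2 ∂μ
      ≤ ∫ ω, ‖Y ω‖ ^ 2 ∂μ + (b : ℝ)⁻¹ * ∫ ω, B (V ω) ∂μ := by
  set η : Fin b → Ω → E := fun i ω => ξ (V ω) (ζ i ω) - ∫ z, ξ (V ω) z ∂ν
  have hVm : Measurable V := hV.mono h𝒢 le_rfl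
  have hmean : Measurable[𝒢] fun ω => ∫ z, ξ (V ω) z ∂ν :=
    hξ.stronglyMeasurable.integral_prod_right.measurable.comp hV
  have hξint := integrable_of_forall_norm_sq_le (ν := ν) hξ hξB
  have hη2 : ∀ i, MemLp (η i) 2 μ := fun i =>
    (memLp_two_comp_of_norm_sq_le hVm (hζ i) hξ hB hξB).sub
      (memLp_two_integral_comp_of_norm_sq_le hVm hξ hB hξB)
  have hYη : ∀ i, ∫ ω, ⟪Y ω, η i ω⟫ ∂μ = 0 := fun i =>
    integral_inner_sub_integral_eq_zero h𝒢 (hζ i) (hindep.indep (Option.some_ne_none i).symm)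
      (hlaw i) hV hξ hξint hY hY2 (hη2 i)
  have hηη : Pairwise fun i j => ∫ ω, ⟪η i ω, η j ω⟫ ∂μ = 0 := by
    intro i j hij
    have hη𝒢 : Measurable[𝒢 ⊔ MeasurableSpace.comap (ζ i) inferInstance] (η i) :=
      (hξ.comp ((hV.mono le_sup_left le_rfl).prodMk
        ((comap_measurable (ζ i)).mono le_sup_right le_rfl))).sub
        (hmean.mono le_sup_left le_rfl)
    exact integral_inner_sub_integral_eq_zero (sup_le h𝒢 (hζ i).comap_le) (hζ j)
      (indep_sup_comap_of_iIndep_option h𝒢 hζ hindep hij) (hlaw j) (hV.mono le_sup_left le_rfl)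
      hξ hξint hη𝒢 (hη2 i) (hη2 j)
  calc ∫ ω, ‖Y ω + (b : ℝ)⁻¹ • ∑ i, η i ω‖ ^ 2 ∂μ
      = ∫ ω, ‖Y ω‖ ^ 2 ∂μ + (b : ℝ)⁻¹ ^ 2 * ∑ i, ∫ ω, ‖η i ω‖ ^ 2 ∂μ :=
        integral_norm_add_smul_sum_sq hY2 hη2 hYη hηη _
    _ ≤ ∫ ω, ‖Y ω‖ ^ 2 ∂μ + (b : ℝ)⁻¹ ^ 2 * ∑ _i : Fin b, ∫ ω, B (V ω) ∂μ := by
        gcongr _ + _ * ∑ i, ?_ with i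
        exact integral_norm_sub_integral_sq_le h𝒢 (hζ i)
          (hindep.indep (Option.some_ne_none i).symm) (hlaw i) hV hξ hB hξB
    _ = ∫ ω, ‖Y ω‖ ^ 2 ∂μ + (b : ℝ)⁻¹ * ∫ ω, B (V ω) ∂μ := by
        rcases eq_or_ne (b : ℝ) 0 with hb | hb
        · simp [hb]
        · simp only [Finset.sum_const, Finset.card_univ, Fintype.card_fin, nsmul_eq_mul]
          field_simp

end Orthogonality

theorem inv_natCast_smul_sum_sub_const {E : Type*} [AddCommGroup E] [Module ℝ E] {b : ℕ}
    (hb : b ≠ 0) (d : Fin b → E) (c : E) :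
    (b : ℝ)⁻¹ • ∑ i, (d i - c) = (b : ℝ)⁻¹ • ∑ i, d i - c := by
  rw [Finset.sum_sub_distrib, Finset.sum_const, Finset.card_univ, Fintype.card_fin, smul_sub,
    ← Nat.cast_smul_eq_nsmul ℝ, smul_smul, inv_mul_cancel₀ (Nat.cast_ne_zero.2 hb), one_smul]

theorem integral_norm_minibatch_update_sub_sq_le {Ω E₁ E₂ E Z : Type*}
    {𝒜 mΩ : MeasurableSpace Ω} {μ : Measure Ω} [IsProbabilityMeasure μ]
    [NormedAddCommGroup E₁] [MeasurableSpace E₁] [NormedAddCommGroup E₂] [MeasurableSpace E₂]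
    [NormedAddCommGroup E] [InnerProductSpace ℝ E] [CompleteSpace E] [MeasurableSpace E]
    [BorelSpace E] [SecondCountableTopology E] [MeasurableSpace Z] {ν : Measure Z}
    [IsProbabilityMeasure ν] (h𝒜 : 𝒜 ≤ mΩ) {b : ℕ} (hb : b ≠ 0) {ζ : Fin b → Ω → Z}
    (hζ : ∀ i, Measurable (ζ i))
    (hindep : iIndep (fun j : Option (Fin b) =>
      j.elim 𝒜 fun i => MeasurableSpace.comap (ζ i) inferInstance) μ)
    (hlaw : ∀ i, μ.map (ζ i) = ν) {x x' : Ω → E₁} {y y' : Ω → E₂} {a : Ω → E}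
    (hx : Measurable[𝒜] x) (hx' : Measurable[𝒜] x') (hy : Measurable[𝒜] y)
    (hy' : Measurable[𝒜] y') (ha : Measurable[𝒜] a) (hx2 : MemLp x 2 μ) (hx'2 : MemLp x' 2 μ)
    (hy2 : MemLp y 2 μ) (hy'2 : MemLp y' 2 μ) (ha2 : MemLp a 2 μ) {Φ : E₁ → E₂ → Z → E}
    (hΦ : Measurable fun q : (E₁ × E₂) × Z => Φ q.1.1 q.1.2 q.2) {L : ℝ}
    (hΦlip : ∀ u₁ u₂ v₁ v₂ z,
      ‖Φ u₁ v₁ z - Φ u₂ v₂ z‖ ^ 2 ≤ 2 * L ^ 2 * (‖u₁ - u₂‖ ^ 2 + ‖v₁ - v₂‖ ^ 2))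
    (hΦint : ∀ u v, Integrable (Φ u v) ν) :
    ∫ ω, ‖a ω + (b : ℝ)⁻¹ • ∑ i, (Φ (x' ω) (y' ω) (ζ i ω) - Φ (x ω) (y ω) (ζ i ω))
        - ∫ z, Φ (x' ω) (y' ω) z ∂ν‖ ^ 2 ∂μ
      ≤ ∫ ω, ‖a ω - ∫ z, Φ (x ω) (y ω) z ∂ν‖ ^ 2 ∂μ
        + (2 * L ^ 2 / b) * ∫ ω, (‖x' ω - x ω‖ ^ 2 + ‖y' ω - y ω‖ ^ 2) ∂μ := by
  have hmean : Measurable fun q : E₁ × E₂ => ∫ z, Φ q.1 q.2 z ∂ν :=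
    hΦ.stronglyMeasurable.integral_prod_right'.measurable
  have hmean_sq : ∀ u v, ‖∫ z, Φ u v z ∂ν - ∫ z, Φ 0 0 z ∂ν‖ ^ 2
      ≤ 2 * L ^ 2 * (‖u‖ ^ 2 + ‖v‖ ^ 2) := fun u v => by
    rw [← integral_sub (hΦint u v) (hΦint 0 0)]
    exact norm_integral_sq_le_of_forall_norm_sq_le fun z => by simpa using hΦlip u 0 v 0 z
  have hmean_xy : Measurable[𝒜] fun ω => ∫ z, Φ (x ω) (y ω) z ∂ν := hmean.comp (hx.prodMk hy)
  have hξ : Measurable (Function.uncurry fun (s : (E₁ × E₂) × (E₁ × E₂)) z =>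
      Φ s.2.1 s.2.2 z - Φ s.1.1 s.1.2 z) :=
    (hΦ.comp (measurable_fst.snd.prodMk measurable_snd)).sub
      (hΦ.comp (measurable_fst.fst.prodMk measurable_snd))
  have hB : Integrable (fun ω => 2 * L ^ 2 * (‖x' ω - x ω‖ ^ 2 + ‖y' ω - y ω‖ ^ 2)) μ :=
    (((hx'2.sub hx2).integrable_norm_pow two_ne_zero).add
      ((hy'2.sub hy2).integrable_norm_pow two_ne_zero)).const_mul _
  have key := integral_norm_add_minibatch_sq_le h𝒜 hζ hindep hlaw (ha.sub hmean_xy)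
    (ha2.sub (memLp_two_comp₂_of_norm_sub_sq_le hmean_sq hx2 hy2
      (hmean_xy.mono h𝒜 le_rfl).aestronglyMeasurable))
    ((hx.prodMk hy).prodMk (hx'.prodMk hy')) hξ hB fun _ _ => hΦlip _ _ _ _ _
  have hrepr : ∀ ω, a ω + (b : ℝ)⁻¹ • ∑ i, (Φ (x' ω) (y' ω) (ζ i ω) - Φ (x ω) (y ω) (ζ i ω))
      - ∫ z, Φ (x' ω) (y' ω) z ∂ν = a ω - ∫ z, Φ (x ω) (y ω) z ∂ν + (b : ℝ)⁻¹ • ∑ i,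
        (Φ (x' ω) (y' ω) (ζ i ω) - Φ (x ω) (y ω) (ζ i ω)
          - ∫ z, (Φ (x' ω) (y' ω) z - Φ (x ω) (y ω) z) ∂ν) := fun ω => by
    rw [inv_natCast_smul_sum_sub_const hb, integral_sub (hΦint _ _) (hΦint _ _)]
    abel
  simp only [Pi.sub_apply, integral_const_mul] at key
  simp_rw [hrepr]
  convert key using 2
  ring

/-- One-step variance-reduction recursion (SARAH/SPIDER): with
`x, x', y, y', a` square-integrable and `𝒜`-measurable, `ζ¹, …, ζᵇ` i.i.d. and (jointly
with `𝒜`) mutually independent, `Φ` measurable with the mean-square Lipschitz property,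
`Φ̄(u,v) = E[Φ(u,v,ζ¹)]`, and
`a' = a + (1/b) Σᵢ (Φ(x',y',ζⁱ) − Φ(x,y,ζⁱ))`, one has
`E‖a' − Φ̄(x',y')‖² ≤ E‖a − Φ̄(x,y)‖² + (2L²/b) E[‖x'−x‖² + ‖y'−y‖²]`. -/
theorem stmt_15 {d p m : ℕ} {Ω : Type*} [mΩ : MeasurableSpace Ω]
    (μP : Measure Ω) [IsProbabilityMeasure μP]
    {Z : Type*} [MeasurableSpace Z]
    (𝒜 : MeasurableSpace Ω) (h𝒜 : 𝒜 ≤ mΩ)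
    (L : ℝ) (b : ℕ) (hb : 0 < b)
    (x x' : Ω → EuclideanSpace ℝ (Fin d)) (y y' : Ω → EuclideanSpace ℝ (Fin p))
    (a : Ω → EuclideanSpace ℝ (Fin m))
    (hxm : Measurable[𝒜] x) (hx'm : Measurable[𝒜] x')
    (hym : Measurable[𝒜] y) (hy'm : Measurable[𝒜] y')
    (ham : Measurable[𝒜] a)
    (hx2 : MemLp (m0 := mΩ) x 2 μP) (hx'2 : MemLp (m0 := mΩ) x' 2 μP)
    (hy2 : MemLp (m0 := mΩ) y 2 μP) (hy'2 : MemLp (m0 := mΩ) y' 2 μP)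
    (ha2 : MemLp (m0 := mΩ) a 2 μP)
    (ζ : Fin b → Ω → Z) (hζm : ∀ i, Measurable[mΩ] (ζ i))
    (hiid : ∀ i j, @IdentDistrib Ω Ω Z mΩ mΩ _ (ζ i) (ζ j) μP μP)
    (hindep : iIndep (fun j : Option (Fin b) =>
      j.elim 𝒜 (fun i => MeasurableSpace.comap (ζ i) inferInstance)) μP)
    (Φ : EuclideanSpace ℝ (Fin d) → EuclideanSpace ℝ (Fin p) → Z → EuclideanSpace ℝ (Fin m))
    (hΦm : Measurable (fun q : (EuclideanSpace ℝ (Fin d) × EuclideanSpace ℝ (Fin p)) × Z =>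
      Φ q.1.1 q.1.2 q.2))
    (hΦlip : ∀ u₁ u₂ v₁ v₂ z, ‖Φ u₁ v₁ z - Φ u₂ v₂ z‖ ^ 2
      ≤ 2 * L ^ 2 * (‖u₁ - u₂‖ ^ 2 + ‖v₁ - v₂‖ ^ 2))
    (hΦint : ∀ u v, Integrable (fun ω => Φ u v (ζ ⟨0, hb⟩ ω)) μP)
    (Φbar : EuclideanSpace ℝ (Fin d) → EuclideanSpace ℝ (Fin p) → EuclideanSpace ℝ (Fin m))
    (hΦbar : ∀ u v, Φbar u v = ∫ ω, Φ u v (ζ ⟨0, hb⟩ ω) ∂μP)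
    (a' : Ω → EuclideanSpace ℝ (Fin m))
    (ha' : ∀ ω, a' ω = a ω
      + (b : ℝ)⁻¹ • ∑ i : Fin b, (Φ (x' ω) (y' ω) (ζ i ω) - Φ (x ω) (y ω) (ζ i ω))) :
    ∫ ω, ‖a' ω - Φbar (x' ω) (y' ω)‖ ^ 2 ∂μP
      ≤ ∫ ω, ‖a ω - Φbar (x ω) (y ω)‖ ^ 2 ∂μP
        + (2 * L ^ 2 / b) * ∫ ω, (‖x' ω - x ω‖ ^ 2 + ‖y' ω - y ω‖ ^ 2) ∂μP := by
  set ν : Measure Z := @Measure.map Ω Z mΩ _ (ζ ⟨0, hb⟩) μP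
  have : IsProbabilityMeasure ν := Measure.isProbabilityMeasure_map (hζm _).aemeasurable
  have hΦz : ∀ u v, Measurable (Φ u v) := fun u v =>
    hΦm.of_uncurry_left (f := fun q z => Φ q.1 q.2 z) (x := (u, v))
  have hΦbarν : ∀ u v, Φbar u v = ∫ z, Φ u v z ∂ν := fun u v => by
    rw [hΦbar, integral_map (hζm _).aemeasurable (hΦz u v).aestronglyMeasurable]
  simp_rw [ha', hΦbarν]
  -- `𝒜` is a local instance here, so the ambient σ-algebra `mΩ` has to be passed by hand.
  exact integral_norm_minibatch_update_sub_sq_le h𝒜 hb.ne' hζm hindep (fun i =>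
      @IdentDistrib.map_eq _ _ _ mΩ mΩ _ _ _ _ _ (hiid i _))
    hxm hx'm hym hy'm ham hx2 hx'2 hy2 hy'2 ha2 hΦm hΦlip fun u v =>
      (integrable_map_measure (hΦz u v).aestronglyMeasurable (hζm _).aemeasurable).2 (hΦint u v)
end
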